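/- arXiv:2312.13443 — 4 statements merged into one kernel-verified Lean document; each statement's English description precedes it below -/
import Mathlib

section
/- Kelley's lemma: Let B be a Boolean algebra, Ξ a finitely additive probability measure on B, δ ∈ [0,1], and Q = {p ∈ B \ {0} : Ξ(p) ≥ δ}. Then for every n ≥ 1 and every finite sequence q₀,…,q_{n-1} ∈ Q, there exists F ⊆ {0,…,n-1} with |F| ≥ δ·n such that ⋀_{i∈F} q_i ≠ 0. Consequently, the intersection number of Q is at least δ. -/
open Finset

section Aux
variable {B : Type*} [BooleanAlgebra B] {ι : Type*} [DecidableEq ι]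

/-- additivity over pairwise disjoint finite families -/
lemma kelley_xi_sup (Ξ : B → ℝ) (h0 : Ξ ⊥ = 0)
    (hadd : ∀ a b : B, a ⊓ b = ⊥ → Ξ (a ⊔ b) = Ξ a + Ξ b)
    (s : Finset ι) (f : ι → B)
    (hdis : ∀ i ∈ s, ∀ j ∈ s, i ≠ j → f i ⊓ f j = ⊥) :
    Ξ (s.sup f) = ∑ i ∈ s, Ξ (f i) := by
  induction s using Finset.induction_on with
  | empty => simpa using h0
  | @insert a s ha ih =>
    rw [Finset.sup_insert, Finset.sum_insert ha, hadd, ih]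
    · intro i hi j hj hij
      exact hdis i (mem_insert_of_mem hi) j (mem_insert_of_mem hj) hij
    · rw [Finset.sup_inf_distrib_left]
      apply (Finset.sup_eq_bot_iff _ _).2
      intro i hi
      exact hdis a (mem_insert_self a s) i (mem_insert_of_mem hi)
        (fun h => ha (h ▸ hi))

/-- partition of ⊤ into "atoms" of the finite family f on s -/
lemma kelley_partition (f : ι → B) (s : Finset ι) :
    s.powerset.sup (fun t => t.inf f ⊓ (s \ t).inf (fun i => (f i)ᶜ)) = ⊤ := by
  induction s using Finset.induction_on with
  | empty => simp
  | @insert a s ha ih =>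
    rw [Finset.powerset_insert, Finset.sup_union, Finset.sup_image]
    have h1 : (s.powerset.sup fun t => t.inf f ⊓ ((insert a s) \ t).inf fun i => (f i)ᶜ)
        = (f a)ᶜ ⊓ s.powerset.sup (fun t => t.inf f ⊓ (s \ t).inf fun i => (f i)ᶜ) := by
      rw [Finset.sup_inf_distrib_left]
      apply Finset.sup_congr rfl
      intro t ht
      have hat : a ∉ t := fun h => ha (Finset.mem_powerset.1 ht h)
      have : (insert a s) \ t = insert a (s \ t) :=
        Finset.insert_sdiff_of_notMem s hat
      rw [this, Finset.inf_insert]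
      ac_rfl
    have h2 : (s.powerset.sup ((fun t => t.inf f ⊓ ((insert a s) \ t).inf fun i => (f i)ᶜ)
          ∘ insert a))
        = f a ⊓ s.powerset.sup (fun t => t.inf f ⊓ (s \ t).inf fun i => (f i)ᶜ) := by
      rw [Finset.sup_inf_distrib_left]
      apply Finset.sup_congr rfl
      intro t ht
      have hat : a ∉ t := fun h => ha (Finset.mem_powerset.1 ht h)
      have h3 : (insert a s) \ (insert a t) = s \ t := by
        rw [Finset.insert_sdiff_insert]
        ext x
        simp only [Finset.mem_sdiff, Finset.mem_insert]
        constructor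
        · rintro ⟨hx, hx2⟩; exact ⟨hx, fun h2 => hx2 (Or.inr h2)⟩
        · rintro ⟨hx, hx2⟩; exact ⟨hx, fun h2 => h2.elim (fun e => ha (e ▸ hx)) hx2⟩
      simp only [Function.comp_apply, Finset.inf_insert, h3]
      ac_rfl
    rw [h1, h2, ih, inf_top_eq, inf_top_eq, compl_sup_eq_top]
end Aux

/-- Kelley's lemma -/
theorem stmt3 {B : Type*} [BooleanAlgebra B] (Ξ : B → ℝ)
    (hnn : ∀ b : B, 0 ≤ Ξ b) (h0 : Ξ ⊥ = 0) (h1 : Ξ ⊤ = 1)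
    (hadd : ∀ a b : B, a ⊓ b = ⊥ → Ξ (a ⊔ b) = Ξ a + Ξ b)
    (δ : ℝ) (hδ : δ ∈ Set.Icc (0 : ℝ) 1) :
    ∀ n : ℕ, 0 < n → ∀ q : Fin n → B, (∀ i, q i ≠ ⊥ ∧ δ ≤ Ξ (q i)) →
      ∃ F : Finset (Fin n), δ * n ≤ F.card ∧ F.inf q ≠ ⊥ := by
  intro n hn q hq
  classical
  set E : Finset (Fin n) → B :=
    fun t => t.inf q ⊓ ((univ : Finset (Fin n)) \ t).inf (fun i => (q i)ᶜ) with hE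
  -- pairwise disjoint
  have hdir : ∀ t t' : Finset (Fin n), (∃ i, i ∈ t ∧ i ∉ t') → E t ⊓ E t' = ⊥ := by
    rintro t t' ⟨i, hit, hit'⟩
    have h1 : E t ≤ q i := le_trans inf_le_left (Finset.inf_le hit)
    have h2 : E t' ≤ (q i)ᶜ := le_trans inf_le_right
      (Finset.inf_le (by simp [Finset.mem_sdiff, hit']))
    have : E t ⊓ E t' ≤ q i ⊓ (q i)ᶜ := inf_le_inf h1 h2
    simpa using le_bot_iff.1 (by simpa using this)
  have hdis : ∀ t ∈ (univ : Finset (Fin n)).powerset, ∀ t' ∈ (univ : Finset (Fin n)).powerset,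
      t ≠ t' → E t ⊓ E t' = ⊥ := by
    intro t _ t' _ htt
    by_cases hc : t ⊆ t'
    · rcases Finset.exists_of_ssubset (lt_of_le_of_ne hc htt) with ⟨i, h1, h2⟩
      rw [inf_comm]; exact hdir t' t ⟨i, h1, h2⟩
    · rcases Finset.not_subset.1 hc with ⟨i, h1, h2⟩
      exact hdir t t' ⟨i, h1, h2⟩
  have htop : (univ : Finset (Fin n)).powerset.sup E = ⊤ := kelley_partition q univ
  have hsum1 : ∑ t ∈ (univ : Finset (Fin n)).powerset, Ξ (E t) = 1 := by
    rw [← kelley_xi_sup Ξ h0 hadd _ E hdis, htop, h1]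
  -- value of each q i
  have hqi : ∀ i, Ξ (q i) = ∑ t ∈ (univ : Finset (Fin n)).powerset,
      (if i ∈ t then Ξ (E t) else 0) := by
    intro i
    have hqeq : q i = (univ : Finset (Fin n)).powerset.sup (fun t => q i ⊓ E t) := by
      rw [← Finset.sup_inf_distrib_left, htop, inf_top_eq]
    have hdis' : ∀ t ∈ (univ : Finset (Fin n)).powerset,
        ∀ t' ∈ (univ : Finset (Fin n)).powerset, t ≠ t' →
        (q i ⊓ E t) ⊓ (q i ⊓ E t') = ⊥ := by
      intro t ht t' ht' htt
      exact le_bot_iff.1 (le_trans (inf_le_inf inf_le_right inf_le_right)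
        (le_of_eq (hdis t ht t' ht' htt)))
    rw [hqeq, kelley_xi_sup Ξ h0 hadd _ _ hdis']
    apply Finset.sum_congr rfl
    intro t _
    by_cases hit : i ∈ t
    · have : q i ⊓ E t = E t := inf_eq_right.2 (le_trans inf_le_left (Finset.inf_le hit))
      rw [this, if_pos hit]
    · have h2 : E t ≤ (q i)ᶜ := le_trans inf_le_right
        (Finset.inf_le (by simp [Finset.mem_sdiff, hit]))
      have : q i ⊓ E t = ⊥ := le_bot_iff.1 (by
        calc q i ⊓ E t ≤ q i ⊓ (q i)ᶜ := inf_le_inf_left _ h2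
          _ = ⊥ := inf_compl_eq_bot)
      rw [this, if_neg hit, h0]
  -- pick maximal F with nonzero meet
  obtain ⟨F, hFmem, hFmax⟩ := Finset.exists_max_image
    ((univ : Finset (Finset (Fin n))).filter (fun F => F.inf q ≠ ⊥)) Finset.card
    ⟨{⟨0, hn⟩}, by simp [(hq ⟨0, hn⟩).1]⟩
  simp only [Finset.mem_filter, Finset.mem_univ, true_and] at hFmem
  refine ⟨F, ?_, hFmem⟩
  -- bound: δ * n ≤ ∑ Ξ (q i) ≤ F.card
  have hlow : δ * n ≤ ∑ i : Fin n, Ξ (q i) := by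
    calc δ * n = ∑ _i : Fin n, δ := by
          rw [Finset.sum_const, Finset.card_univ, Fintype.card_fin, nsmul_eq_mul, mul_comm]
      _ ≤ ∑ i : Fin n, Ξ (q i) := Finset.sum_le_sum fun i _ => (hq i).2
  have hup : ∑ i : Fin n, Ξ (q i) ≤ (F.card : ℝ) := by
    have step1 : ∑ i : Fin n, Ξ (q i)
        = ∑ t ∈ (univ : Finset (Fin n)).powerset, (t.card : ℝ) * Ξ (E t) := by
      simp only [hqi]
      rw [Finset.sum_comm]
      apply Finset.sum_congr rfl
      intro t _
      rw [Finset.sum_ite_mem, Finset.univ_inter, Finset.sum_const, nsmul_eq_mul]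
    have step2 : ∀ t ∈ (univ : Finset (Fin n)).powerset,
        (t.card : ℝ) * Ξ (E t) ≤ (F.card : ℝ) * Ξ (E t) := by
      intro t _
      by_cases hb : E t = ⊥
      · rw [hb, h0, mul_zero, mul_zero]
      · have htinf : t.inf q ≠ ⊥ := by
          intro hcon
          exact hb (le_bot_iff.1 (le_trans inf_le_left (le_of_eq hcon)))
        have := hFmax t (by simp [htinf])
        exact mul_le_mul_of_nonneg_right (by exact_mod_cast this) (hnn _)
    calc ∑ i : Fin n, Ξ (q i)
        = ∑ t ∈ (univ : Finset (Fin n)).powerset, (t.card : ℝ) * Ξ (E t) := step1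
      _ ≤ ∑ t ∈ (univ : Finset (Fin n)).powerset, (F.card : ℝ) * Ξ (E t) :=
          Finset.sum_le_sum step2
      _ = (F.card : ℝ) * ∑ t ∈ (univ : Finset (Fin n)).powerset, Ξ (E t) := by
          rw [Finset.mul_sum]
      _ = (F.card : ℝ) := by rw [hsum1, mul_one]
  exact le_trans hlow hup
end

section
/- Let Ξ be a free finitely additive measure on P(K) with Ξ(K) = δ < ∞, E ⊆ K with Ξ(E) > 0, I a nonempty finite set, and for each i ∈ I let f_i : K → [0,∞) be bounded. Then for every ε > 0 and every finite F ⊆ K, there is a nonempty finite set u ⊆ K \ F such that for every i ∈ I, |(δ/|u|)∑_{k∈u} f_i(k) − (δ/Ξ(E))∫_E f_i dΞ| < ε. -/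
section helpers
variable {K : Type*} (Ξ : Set K → ℝ)

lemma fa_sum (h0 : Ξ ∅ = 0)
    (hadd : ∀ A C : Set K, A ∩ C = ∅ → Ξ (A ∪ C) = Ξ A + Ξ C)
    (P : Finset (Set K)) (hdisj : ∀ A ∈ P, ∀ B ∈ P, A ≠ B → A ∩ B = ∅) :
    Ξ (⋃ A ∈ P, A) = ∑ A ∈ P, Ξ A := by
  classical
  induction P using Finset.induction_on with
  | empty => simpa using h0
  | @insert A P hA ih =>
    have hd : A ∩ (⋃ B ∈ P, B) = ∅ := by
      ext x
      simp only [Set.mem_inter_iff, Set.mem_iUnion, Set.mem_empty_iff_false, iff_false]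
      rintro ⟨hxA, B, hB, hxB⟩
      have hne : A ≠ B := by rintro rfl; exact hA hB
      have := hdisj A (Finset.mem_insert_self _ _) B (Finset.mem_insert_of_mem hB) hne
      exact absurd (Set.mem_inter hxA hxB) (by simp [this])
    have : (⋃ B ∈ insert A P, B) = A ∪ ⋃ B ∈ P, B := by
      simp [Set.biUnion_insert]
    rw [this, hadd _ _ hd, Finset.sum_insert hA,
      ih (fun C hC D hD h => hdisj C (Finset.mem_insert_of_mem hC) D (Finset.mem_insert_of_mem hD) h)]

lemma fa_finset_zero (h0 : Ξ ∅ = 0)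
    (hadd : ∀ A C : Set K, A ∩ C = ∅ → Ξ (A ∪ C) = Ξ A + Ξ C)
    (hfree : ∀ k : K, Ξ {k} = 0) (s : Finset K) : Ξ ↑s = 0 := by
  classical
  induction s using Finset.induction_on with
  | empty => simpa using h0
  | @insert a s ha ih =>
    have h1 : (↑(insert a s) : Set K) = {a} ∪ ↑s := by
      rw [Finset.coe_insert, Set.insert_eq]
    have h2 : ({a} : Set K) ∩ ↑s = ∅ := by
      ext x
      simp only [Set.mem_inter_iff, Set.mem_singleton_iff, Finset.mem_coe,
        Set.mem_empty_iff_false, iff_false, not_and]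
      rintro rfl hx
      exact ha hx
    rw [h1, hadd _ _ h2, hfree, ih]
    ring

lemma fa_finite_zero (h0 : Ξ ∅ = 0)
    (hadd : ∀ A C : Set K, A ∩ C = ∅ → Ξ (A ∪ C) = Ξ A + Ξ C)
    (hfree : ∀ k : K, Ξ {k} = 0) {s : Set K} (hs : s.Finite) : Ξ s = 0 := by
  have := fa_finset_zero Ξ h0 hadd hfree hs.toFinset
  rwa [Set.Finite.coe_toFinset] at this

lemma fa_mono (hnn : ∀ A : Set K, 0 ≤ Ξ A)
    (hadd : ∀ A C : Set K, A ∩ C = ∅ → Ξ (A ∪ C) = Ξ A + Ξ C)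
    {A C : Set K} (h : A ⊆ C) : Ξ A ≤ Ξ C := by
  have : Ξ C = Ξ A + Ξ (C \ A) := by
    rw [← hadd _ _ (by ext x; simp only [Set.mem_inter_iff, Set.mem_diff,
      Set.mem_empty_iff_false, iff_false, not_and]; tauto)]
    congr 1
    ext x
    simp only [Set.mem_union, Set.mem_diff]
    constructor
    · rintro hx; by_cases hA : x ∈ A
      · exact Or.inl hA
      · exact Or.inr ⟨hx, hA⟩
    · rintro (hx | ⟨hx, _⟩)
      exacts [h hx, hx]
  rw [this]
  linarith [hnn (C \ A)]

end helpers

/-- `P` is a finite partition of `K` into sets belonging to the field of sets `B`. -/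
def IsFieldPartition {K : Type*} (B : Set (Set K)) (P : Finset (Set K)) : Prop :=
  (∀ E ∈ P, E ∈ B) ∧ (∀ E ∈ P, ∀ F ∈ P, E ≠ F → E ∩ F = ∅) ∧ (⋃ E ∈ P, E) = Set.univ

/-- Darboux/Riemann-style integral with respect to a finitely additive measure. -/
def HasFAMIntegral {K : Type*} (B : Set (Set K)) (Ξ : Set K → ℝ) (f : K → ℝ) (I : ℝ) : Prop :=
  IsLUB {s | ∃ P : Finset (Set K), IsFieldPartition B P ∧
    s = ∑ E ∈ P, Ξ E * sInf (f '' E)} I ∧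
  IsGLB {s | ∃ P : Finset (Set K), IsFieldPartition B P ∧
    s = ∑ E ∈ P, Ξ E * sSup (f '' E)} I

lemma endgame {W M m N n Sg A' B' J δ ε η : ℝ}
    (hε : 0 < ε) (hδ : 0 < δ) (hW : 0 < W) (hM0 : 0 ≤ M) (hm0 : 0 ≤ m)
    (hN0 : 0 < N) (hNbig : δ*m*M/(N*W) < ε/2) (hηδ : δ*η < ε/2)
    (hn_low : N*W ≤ n) (hn_up : n ≤ N*W + m)
    (hSg0 : 0 ≤ Sg) (hSg_low : N*A' ≤ Sg) (hSg_up : Sg ≤ N*B' + m*M)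
    (hJlow : A' ≤ J) (hJhigh : J ≤ B') (hgap : B' - A' ≤ η*W)
    (hA'0 : 0 ≤ A') (hA'M : A' ≤ M*W) (hB'0 : 0 ≤ B') :
    |δ/n * Sg - δ/W * J| < ε := by
  have hNW : (0:ℝ) < N*W := mul_pos hN0 hW
  have hn0 : (0:ℝ) < n := lt_of_lt_of_le hNW hn_low
  have hNWm : (0:ℝ) < N*W + m := by linarith
  have hW0 : W ≠ 0 := ne_of_gt hW
  -- upper bound on the average
  have h1 : δ/n * Sg ≤ δ*B'/W + δ*m*M/(N*W) := by
    have ha : δ/n * Sg = δ*Sg/n := by ring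
    have hb : δ*Sg ≤ δ*(N*B' + m*M) := mul_le_mul_of_nonneg_left hSg_up hδ.le
    have hc : δ*Sg/n ≤ δ*(N*B'+m*M)/(N*W) :=
      div_le_div₀ (mul_nonneg hδ.le (add_nonneg (mul_nonneg hN0.le hB'0)
        (mul_nonneg hm0 hM0))) hb hNW hn_low
    have hd : δ*(N*B'+m*M)/(N*W) = δ*B'/W + δ*m*M/(N*W) := by
      field_simp
    rw [ha]
    rw [hd] at hc
    exact hc
  -- lower bound on the average
  have h2 : δ*A'/W - δ*m*M/(N*W) ≤ δ/n * Sg := by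
    have ha : δ*(N*A') ≤ δ*Sg := mul_le_mul_of_nonneg_left hSg_low hδ.le
    have hb : δ*(N*A')/(N*W + m) ≤ δ*Sg/n :=
      div_le_div₀ (mul_nonneg hδ.le hSg0) ha hn0 hn_up
    have hc : δ*A'/W - δ*(N*A')/(N*W+m) = δ*A'*m/(W*(N*W+m)) := by
      rw [div_sub_div _ _ hW0 (ne_of_gt hNWm)]
      congr 1
      ring
    have hdd : δ*A'*m/(W*(N*W+m)) ≤ δ*m*M/(N*W) := by
      rw [div_le_div_iff₀ (mul_pos hW hNWm) hNW]
      have key : A'*(N*W) ≤ M*W*(N*W+m) := by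
        nlinarith [mul_le_mul_of_nonneg_right hA'M hNW.le,
          mul_nonneg (mul_nonneg hM0 hW.le) hm0]
      nlinarith [mul_le_mul_of_nonneg_left key (mul_nonneg hδ.le hm0)]
    have he : δ/n * Sg = δ*Sg/n := by ring
    rw [he]
    linarith
  -- bounds on the target value
  have h3 : δ*A'/W ≤ δ/W * J := by
    have := mul_le_mul_of_nonneg_left hJlow (div_nonneg hδ.le hW.le)
    calc δ*A'/W = δ/W * A' := by ring
      _ ≤ δ/W * J := this
  have h4 : δ/W * J ≤ δ*B'/W := by
    have := mul_le_mul_of_nonneg_left hJhigh (div_nonneg hδ.le hW.le)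
    calc δ/W * J ≤ δ/W * B' := this
      _ = δ*B'/W := by ring
  have h5 : δ*B'/W ≤ δ*A'/W + δ*η := by
    have hx : δ*(B'-A') ≤ δ*(η*W) := mul_le_mul_of_nonneg_left hgap hδ.le
    have hy : δ*(B'-A')/W ≤ δ*(η*W)/W := by gcongr
    have hz : δ*(η*W)/W = δ*η := by field_simp
    have hw : δ*B'/W - δ*A'/W = δ*(B'-A')/W := by ring
    linarith
  rw [abs_lt]
  constructor
  · linarith
  · linarith

/-- Approximation of integrals with respect to a free finitely additive measure on `𝒫(K)`
by uniform averages over finite sets: given `Ξ` free with `Ξ K = δ`, `E` of positive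
measure, finitely many bounded nonnegative `f i` with `∫_E f i dΞ = J i`, any `ε > 0` and
any finite `F ⊆ K`, there is a nonempty finite `u ⊆ K \ F` with
`|(δ/|u|) ∑_{k ∈ u} f i k − (δ/Ξ E)·J i| < ε` for all `i`. -/
theorem stmt10 {K : Type*} (Ξ : Set K → ℝ) (δ : ℝ)
    (hnn : ∀ A : Set K, 0 ≤ Ξ A) (h0 : Ξ ∅ = 0)
    (hadd : ∀ A C : Set K, A ∩ C = ∅ → Ξ (A ∪ C) = Ξ A + Ξ C)
    (hfree : ∀ k : K, Ξ {k} = 0) (htot : Ξ Set.univ = δ)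
    (E : Set K) (hE : 0 < Ξ E)
    (ι : Type*) [Fintype ι] [Nonempty ι] (f : ι → K → ℝ)
    (hfnn : ∀ i k, 0 ≤ f i k) (hbd : ∀ i, ∃ M, ∀ k, f i k ≤ M)
    (J : ι → ℝ)
    (hJ : ∀ i, HasFAMIntegral (Set.univ : Set (Set K)) Ξ (E.indicator (f i)) (J i)) :
    ∀ ε : ℝ, 0 < ε → ∀ F : Finset K, ∃ u : Finset K, u.Nonempty ∧
      (∀ k ∈ u, k ∉ F) ∧
      ∀ i, |δ / u.card * ∑ k ∈ u, f i k - δ / Ξ E * J i| < ε := by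
  classical
  intro ε hε F
  set W := Ξ E with hWdef
  have hδW : W ≤ δ := htot ▸ fa_mono Ξ hnn hadd (Set.subset_univ E)
  have hδ : 0 < δ := lt_of_lt_of_le hE hδW
  -- global bound M
  choose M₀ hM₀ using hbd
  obtain ⟨i₀⟩ := ‹Nonempty ι›
  set M : ℝ := Finset.univ.sup' ⟨i₀, Finset.mem_univ i₀⟩ M₀ with hMdef
  have hM : ∀ i k, f i k ≤ M := fun i k =>
    le_trans (hM₀ i k) (Finset.le_sup' M₀ (Finset.mem_univ i))
  have hEne : E.Nonempty := by
    rw [Set.nonempty_iff_ne_empty]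
    intro h
    rw [hWdef, h, h0] at hE
    exact lt_irrefl 0 hE
  obtain ⟨k₀₀, hk₀₀⟩ := hEne
  have hM0 : 0 ≤ M := le_trans (hfnn i₀ k₀₀) (hM i₀ k₀₀)
  -- η
  set η : ℝ := ε / (2 * (δ + 1)) with hηdef
  have hη0 : 0 < η := by positivity
  -- the coloring
  set nn : ℕ := ⌈M / η⌉₊ with hnndef
  set c : K → (ι → Fin (nn + 1)) × Bool := fun k =>
    (fun i => ⟨min (⌊f i k / η⌋₊) nn, Nat.lt_succ_of_le (min_le_right _ _)⟩,
      decide (k ∈ E)) with hcdef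
  set P : Finset (Set K) := Finset.image (fun v => c ⁻¹' {v}) Finset.univ with hPdef
  have hPmem : ∀ A ∈ P, ∃ v, A = c ⁻¹' {v} := by
    intro A hA
    rw [hPdef, Finset.mem_image] at hA
    obtain ⟨v, _, hv⟩ := hA
    exact ⟨v, hv.symm⟩
  have hPdisj : ∀ A ∈ P, ∀ B ∈ P, A ≠ B → A ∩ B = ∅ := by
    intro A hA B hB hne
    obtain ⟨v, rfl⟩ := hPmem A hA
    obtain ⟨w, rfl⟩ := hPmem B hB
    have hvw : v ≠ w := by rintro rfl; exact hne rfl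
    ext x
    simp only [Set.mem_inter_iff, Set.mem_preimage, Set.mem_singleton_iff,
      Set.mem_empty_iff_false, iff_false, not_and]
    rintro rfl h
    exact hvw h
  have hPunion : (⋃ A ∈ P, A) = Set.univ := by
    apply Set.eq_univ_of_forall
    intro k
    have h1 : (c ⁻¹' {c k}) ∈ P := Finset.mem_image.mpr ⟨c k, Finset.mem_univ _, rfl⟩
    exact Set.mem_biUnion h1 rfl
  have hPpart : IsFieldPartition (Set.univ : Set (Set K)) P :=
    ⟨fun _ _ => trivial, hPdisj, hPunion⟩
  -- cells respect E
  have hcellE : ∀ A ∈ P, ∀ k₀ ∈ A, ∀ k ∈ A, (k ∈ E ↔ k₀ ∈ E) := by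
    intro A hA k₀ hk₀ k hk
    obtain ⟨v, rfl⟩ := hPmem A hA
    have h1 : c k = c k₀ := by
      rw [Set.mem_preimage, Set.mem_singleton_iff] at hk hk₀
      rw [hk, hk₀]
    have h2 : decide (k ∈ E) = decide (k₀ ∈ E) := congrArg Prod.snd h1
    exact decide_eq_decide.mp h2
  -- floor cap
  have hfloorcap : ∀ i k, ⌊f i k / η⌋₊ ≤ nn := by
    intro i k
    have h1 : f i k / η ≤ M / η := by gcongr; exact hM i k
    calc ⌊f i k / η⌋₊ ≤ ⌊M / η⌋₊ := Nat.floor_le_floor h1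
      _ ≤ nn := Nat.floor_le_ceil _
  -- oscillation bound
  have hosc : ∀ A ∈ P, ∀ (i : ι), A.Nonempty →
      sSup (f i '' A) - sInf (f i '' A) ≤ η := by
    intro A hA i ⟨k₀, hk₀⟩
    obtain ⟨v, rfl⟩ := hPmem A hA
    have hsame : ∀ k ∈ c ⁻¹' {v}, ⌊f i k / η⌋₊ = ⌊f i k₀ / η⌋₊ := by
      intro k hk
      have h1 : c k = c k₀ := by
        rw [Set.mem_preimage, Set.mem_singleton_iff] at hk hk₀
        rw [hk, hk₀]
      have h2 : (c k).1 i = (c k₀).1 i := by rw [h1]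
      have h3 : min (⌊f i k / η⌋₊) nn = min (⌊f i k₀ / η⌋₊) nn := congrArg Fin.val h2
      rwa [min_eq_left (hfloorcap i k), min_eq_left (hfloorcap i k₀)] at h3
    set m₀ : ℕ := ⌊f i k₀ / η⌋₊ with hm₀
    have bound1 : ∀ k ∈ c ⁻¹' {v}, f i k ≤ ((m₀ : ℝ) + 1) * η := by
      intro k hk
      have := Nat.lt_floor_add_one (f i k / η)
      rw [hsame k hk] at this
      have := (div_lt_iff₀ hη0).mp this
      linarith
    have bound2 : ∀ k ∈ c ⁻¹' {v}, (m₀ : ℝ) * η ≤ f i k := by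
      intro k hk
      have h1 : (⌊f i k / η⌋₊ : ℝ) ≤ f i k / η := Nat.floor_le (div_nonneg (hfnn i k) hη0.le)
      rw [hsame k hk] at h1
      have := (le_div_iff₀ hη0).mp h1
      linarith
    have hsup : sSup (f i '' (c ⁻¹' {v})) ≤ ((m₀ : ℝ) + 1) * η := by
      apply csSup_le (Set.Nonempty.image _ ⟨k₀, hk₀⟩)
      rintro y ⟨k, hk, rfl⟩
      exact bound1 k hk
    have hinf : (m₀ : ℝ) * η ≤ sInf (f i '' (c ⁻¹' {v})) := by
      apply le_csInf (Set.Nonempty.image _ ⟨k₀, hk₀⟩)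
      rintro y ⟨k, hk, rfl⟩
      exact bound2 k hk
    linarith
  -- cells of positive measure inside E
  set S : Finset (Set K) := P.filter (fun A => A ⊆ E ∧ 0 < Ξ A) with hSdef
  have hSsubP : S ⊆ P := Finset.filter_subset _ _
  have hSE : ∀ A ∈ S, A ⊆ E := fun A hA => ((Finset.mem_filter.mp hA).2).1
  have hSpos : ∀ A ∈ S, 0 < Ξ A := fun A hA => ((Finset.mem_filter.mp hA).2).2
  have hSne : ∀ A ∈ S, A.Nonempty := by
    intro A hA
    rw [Set.nonempty_iff_ne_empty]
    intro h
    have := hSpos A hA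
    rw [h, h0] at this
    exact lt_irrefl 0 this
  have hSinfinite : ∀ A ∈ S, A.Infinite := by
    intro A hA
    rw [Set.Infinite]
    intro h
    have := fa_finite_zero Ξ h0 hadd hfree h
    have h2 := hSpos A hA
    rw [this] at h2
    exact lt_irrefl 0 h2
  -- the measure of E is the sum over S
  have hSsum : ∑ A ∈ S, Ξ A = W := by
    set S' : Finset (Set K) := P.filter (fun A => A ⊆ E) with hS'def
    have hUS' : (⋃ A ∈ S', A) = E := by
      apply Set.Subset.antisymm
      · apply Set.iUnion₂_subset
        intro A hA
        exact (Finset.mem_filter.mp hA).2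
      · intro k hk
        have h1 : (c ⁻¹' {c k}) ∈ P := Finset.mem_image.mpr ⟨c k, Finset.mem_univ _, rfl⟩
        have h2 : c ⁻¹' {c k} ⊆ E := by
          intro k' hk'
          exact (hcellE _ h1 k rfl k' hk').mpr hk
        exact Set.mem_biUnion (Finset.mem_filter.mpr ⟨h1, h2⟩) rfl
    have h3 : Ξ E = ∑ A ∈ S', Ξ A := by
      rw [← hUS']
      exact fa_sum Ξ h0 hadd S' (fun A hA B hB h => hPdisj A (Finset.filter_subset _ _ hA)
        B (Finset.filter_subset _ _ hB) h)
    have h4 : S = S'.filter (fun A => 0 < Ξ A) := by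
      rw [hS'def, Finset.filter_filter, hSdef]
    rw [hWdef, h3, h4]
    exact Finset.sum_filter_of_ne (fun A _ h =>
      lt_of_le_of_ne (hnn A) (Ne.symm h))
  have hSnonempty : S.Nonempty := by
    apply Finset.nonempty_of_sum_ne_zero (f := Ξ)
    rw [hSsum]
    exact ne_of_gt hE
  -- basic sInf/sSup facts
  have hbddB : ∀ (i : ι) (A : Set K), BddBelow (f i '' A) := by
    intro i A
    refine ⟨0, ?_⟩
    rintro y ⟨k, _, rfl⟩
    exact hfnn i k
  have hbddA : ∀ (i : ι) (A : Set K), BddAbove (f i '' A) := by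
    intro i A
    refine ⟨M, ?_⟩
    rintro y ⟨k, _, rfl⟩
    exact hM i k
  have hinf0 : ∀ (i : ι), ∀ A ∈ S, 0 ≤ sInf (f i '' A) := by
    intro i A hA
    apply le_csInf ((hSne A hA).image _)
    rintro y ⟨k, _, rfl⟩
    exact hfnn i k
  have hsupM : ∀ (i : ι), ∀ A ∈ S, sSup (f i '' A) ≤ M := by
    intro i A hA
    apply csSup_le ((hSne A hA).image _)
    rintro y ⟨k, _, rfl⟩
    exact hM i k
  have hinfle : ∀ (i : ι), ∀ A ∈ S, sInf (f i '' A) ≤ sSup (f i '' A) := by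
    intro i A hA
    exact csInf_le_csSup ((hSne A hA).image _) (hbddB i A) (hbddA i A)
  -- identification of the lower/upper sums over P with sums over S
  have hgeq : ∀ (i : ι), ∀ A ∈ S, (E.indicator (f i)) '' A = f i '' A := by
    intro i A hA
    apply Set.image_congr
    intro k hk
    exact Set.indicator_of_mem (hSE A hA hk) _
  have hcellEsub : ∀ A ∈ P, ¬ A ⊆ E → ∀ k ∈ A, k ∉ E := by
    intro A hA hnsub k hk hkE
    obtain ⟨k₁, hk₁A, hk₁E⟩ := Set.not_subset.mp hnsub
    exact hk₁E ((hcellE A hA k hk k₁ hk₁A).mpr hkE)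
  have himage0 : ∀ (i : ι), ∀ A ∈ P, A.Nonempty → ¬ A ⊆ E →
      (E.indicator (f i)) '' A = {0} := by
    intro i A hA hne hnsub
    have h1 : ∀ k ∈ A, E.indicator (f i) k = (fun _ => (0:ℝ)) k := fun k hk =>
      Set.indicator_of_notMem (hcellEsub A hA hnsub k hk) _
    rw [Set.image_congr h1]
    exact hne.image_const 0
  have hcoreInf : ∀ (i : ι), ∀ A ∈ P,
      Ξ A * sInf ((E.indicator (f i)) '' A) ≠ 0 → (A ⊆ E ∧ 0 < Ξ A) := by
    intro i A hA hne0
    have hΞne : Ξ A ≠ 0 := fun h => hne0 (by rw [h, zero_mul])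
    have hpos := lt_of_le_of_ne (hnn A) (Ne.symm hΞne)
    have hAne : A.Nonempty := Set.nonempty_iff_ne_empty.mpr (fun h => hΞne (by rw [h, h0]))
    refine ⟨?_, hpos⟩
    by_contra hnsub
    apply hne0
    rw [himage0 i A hA hAne hnsub, csInf_singleton, mul_zero]
  have hcoreSup : ∀ (i : ι), ∀ A ∈ P,
      Ξ A * sSup ((E.indicator (f i)) '' A) ≠ 0 → (A ⊆ E ∧ 0 < Ξ A) := by
    intro i A hA hne0
    have hΞne : Ξ A ≠ 0 := fun h => hne0 (by rw [h, zero_mul])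
    have hpos := lt_of_le_of_ne (hnn A) (Ne.symm hΞne)
    have hAne : A.Nonempty := Set.nonempty_iff_ne_empty.mpr (fun h => hΞne (by rw [h, h0]))
    refine ⟨?_, hpos⟩
    by_contra hnsub
    apply hne0
    rw [himage0 i A hA hAne hnsub, csSup_singleton, mul_zero]
  have hLeq : ∀ (i : ι), ∑ A ∈ P, Ξ A * sInf ((E.indicator (f i)) '' A)
      = ∑ A ∈ S, Ξ A * sInf (f i '' A) := by
    intro i
    rw [← Finset.sum_filter_of_ne (hcoreInf i), ← hSdef]
    exact Finset.sum_congr rfl (fun A hA => by rw [hgeq i A hA])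
  have hUeq : ∀ (i : ι), ∑ A ∈ P, Ξ A * sSup ((E.indicator (f i)) '' A)
      = ∑ A ∈ S, Ξ A * sSup (f i '' A) := by
    intro i
    rw [← Finset.sum_filter_of_ne (hcoreSup i), ← hSdef]
    exact Finset.sum_congr rfl (fun A hA => by rw [hgeq i A hA])
  have hLlow : ∀ (i : ι), ∑ A ∈ S, Ξ A * sInf (f i '' A) ≤ J i := by
    intro i
    have h1 := (hJ i).1.1 ⟨P, hPpart, rfl⟩
    rwa [hLeq i] at h1
  have hUhigh : ∀ (i : ι), J i ≤ ∑ A ∈ S, Ξ A * sSup (f i '' A) := by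
    intro i
    have h1 := (hJ i).2.1 ⟨P, hPpart, rfl⟩
    rwa [hUeq i] at h1
  have hULdiff : ∀ (i : ι), ∑ A ∈ S, Ξ A * sSup (f i '' A)
      - ∑ A ∈ S, Ξ A * sInf (f i '' A) ≤ η * W := by
    intro i
    rw [← Finset.sum_sub_distrib]
    calc ∑ A ∈ S, (Ξ A * sSup (f i '' A) - Ξ A * sInf (f i '' A))
        ≤ ∑ A ∈ S, Ξ A * η := by
          apply Finset.sum_le_sum
          intro A hA
          rw [← mul_sub]
          exact mul_le_mul_of_nonneg_left (hosc A (hSsubP hA) i (hSne A hA)) (hnn A)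
      _ = η * W := by rw [← Finset.sum_mul, hSsum]; ring
  have hAB : ∀ (i : ι), ∑ A ∈ S, Ξ A * sInf (f i '' A) ≤ ∑ A ∈ S, Ξ A * sSup (f i '' A) :=
    fun i => Finset.sum_le_sum (fun A hA =>
      mul_le_mul_of_nonneg_left (hinfle i A hA) (hnn A))
  have hBM : ∀ (i : ι), ∑ A ∈ S, Ξ A * sSup (f i '' A) ≤ M * W := by
    intro i
    calc ∑ A ∈ S, Ξ A * sSup (f i '' A) ≤ ∑ A ∈ S, Ξ A * M :=
          Finset.sum_le_sum (fun A hA => mul_le_mul_of_nonneg_left (hsupM i A hA) (hnn A))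
      _ = M * W := by rw [← Finset.sum_mul, hSsum]; ring
  have hA0 : ∀ (i : ι), 0 ≤ ∑ A ∈ S, Ξ A * sInf (f i '' A) :=
    fun i => Finset.sum_nonneg (fun A hA => mul_nonneg (hnn A) (hinf0 i A hA))
  -- choice of N
  clear_value W M η nn c P S
  set m : ℕ := S.card with hmdef
  have hm0 : (0:ℝ) ≤ (m:ℝ) := Nat.cast_nonneg _
  set N : ℕ := ⌈2*δ*(m:ℝ)*M/(ε*W)⌉₊ + 1 with hNdef
  clear_value N
  have hN0 : (0:ℝ) < (N:ℝ) := by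
    rw [hNdef]; exact_mod_cast Nat.succ_pos _
  have hNgt : 2*δ*(m:ℝ)*M/(ε*W) < (N:ℝ) := by
    rw [hNdef]
    push_cast
    linarith [Nat.le_ceil (2*δ*(m:ℝ)*M/(ε*W))]
  have hNW : (0:ℝ) < (N:ℝ)*W := mul_pos hN0 hE
  have hNbig : δ*(m:ℝ)*M/((N:ℝ)*W) < ε/2 := by
    rw [div_lt_iff₀ hNW]
    have h1 : 2*δ*(m:ℝ)*M < (N:ℝ)*(ε*W) := by
      have h2 := (div_lt_iff₀ (by positivity : (0:ℝ) < ε*W)).mp hNgt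
      linarith
    nlinarith
  -- choice of sample points
  have hpick : ∀ A : Set K, ∃ t : Finset K, A ∈ S →
      (↑t ⊆ A \ ↑F ∧ t.card = ⌈(N:ℝ) * Ξ A⌉₊) := by
    intro A
    by_cases hA : A ∈ S
    · obtain ⟨t, ht1, ht2⟩ :=
        ((hSinfinite A hA).diff F.finite_toSet).exists_subset_card_eq ⌈(N:ℝ) * Ξ A⌉₊
      exact ⟨t, fun _ => ⟨ht1, ht2⟩⟩
    · exact ⟨∅, fun h => absurd h hA⟩
  choose t ht using hpick
  have htsub : ∀ A ∈ S, ↑(t A) ⊆ A \ ↑F := fun A hA => (ht A hA).1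
  have htcard : ∀ A ∈ S, (t A).card = ⌈(N:ℝ) * Ξ A⌉₊ := fun A hA => (ht A hA).2
  have htdisj : ∀ A ∈ S, ∀ B ∈ S, A ≠ B → Disjoint (t A) (t B) := by
    intro A hA B hB hne
    rw [Finset.disjoint_left]
    intro k hkA hkB
    have h1 : k ∈ A := (htsub A hA hkA).1
    have h2 : k ∈ B := (htsub B hB hkB).1
    have h3 := hPdisj A (hSsubP hA) B (hSsubP hB) hne
    exact absurd (Set.mem_inter h1 h2) (by rw [h3]; exact Set.notMem_empty k)
  set u : Finset K := S.biUnion t with hudef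
  have hcard_u : u.card = ∑ A ∈ S, (t A).card := Finset.card_biUnion htdisj
  have hsum_u : ∀ (i : ι), ∑ k ∈ u, f i k = ∑ A ∈ S, ∑ k ∈ t A, f i k := by
    intro i
    exact Finset.sum_biUnion (fun A hA B hB hne => htdisj A hA B hB hne)
  have hnA_low : ∀ A ∈ S, (N:ℝ) * Ξ A ≤ ((t A).card : ℝ) := by
    intro A hA
    rw [htcard A hA]
    exact Nat.le_ceil _
  have hnA_up : ∀ A ∈ S, ((t A).card : ℝ) ≤ (N:ℝ) * Ξ A + 1 := by
    intro A hA
    rw [htcard A hA]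
    exact le_of_lt (Nat.ceil_lt_add_one (mul_nonneg hN0.le (hnn A)))
  have hn_low : (N:ℝ) * W ≤ (u.card:ℝ) := by
    rw [hcard_u]
    push_cast
    calc (N:ℝ)*W = ∑ A ∈ S, (N:ℝ) * Ξ A := by rw [← Finset.mul_sum, hSsum]
      _ ≤ ∑ A ∈ S, ((t A).card:ℝ) := Finset.sum_le_sum hnA_low
  have hn_up : (u.card:ℝ) ≤ (N:ℝ)*W + (m:ℝ) := by
    rw [hcard_u]
    push_cast
    calc ∑ A ∈ S, ((t A).card:ℝ) ≤ ∑ A ∈ S, ((N:ℝ) * Ξ A + 1) := Finset.sum_le_sum hnA_up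
      _ = (N:ℝ)*W + (m:ℝ) := by
          rw [Finset.sum_add_distrib, ← Finset.mul_sum, hSsum, Finset.sum_const, hmdef]
          push_cast
          ring
  have hu_pos : (0:ℝ) < (u.card:ℝ) := lt_of_lt_of_le hNW hn_low
  -- per-function sum bounds over u
  have hSg_low : ∀ (i : ι), (N:ℝ) * (∑ A ∈ S, Ξ A * sInf (f i '' A)) ≤ ∑ k ∈ u, f i k := by
    intro i
    rw [hsum_u i, Finset.mul_sum]
    apply Finset.sum_le_sum
    intro A hA
    have h1 : (t A).card • sInf (f i '' A) ≤ ∑ k ∈ t A, f i k := by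
      apply Finset.card_nsmul_le_sum
      intro k hk
      exact csInf_le (hbddB i A) (Set.mem_image_of_mem _ ((htsub A hA hk).1))
    rw [nsmul_eq_mul] at h1
    calc (N:ℝ) * (Ξ A * sInf (f i '' A)) = ((N:ℝ) * Ξ A) * sInf (f i '' A) := by ring
      _ ≤ ((t A).card:ℝ) * sInf (f i '' A) :=
          mul_le_mul_of_nonneg_right (hnA_low A hA) (hinf0 i A hA)
      _ ≤ ∑ k ∈ t A, f i k := h1
  have hSg_up : ∀ (i : ι), ∑ k ∈ u, f i k
      ≤ (N:ℝ) * (∑ A ∈ S, Ξ A * sSup (f i '' A)) + (m:ℝ) * M := by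
    intro i
    rw [hsum_u i]
    have key : ∀ A ∈ S, ∑ k ∈ t A, f i k ≤ (N:ℝ) * (Ξ A * sSup (f i '' A)) + M := by
      intro A hA
      have h1 : ∑ k ∈ t A, f i k ≤ (t A).card • sSup (f i '' A) := by
        apply Finset.sum_le_card_nsmul
        intro k hk
        exact le_csSup (hbddA i A) (Set.mem_image_of_mem _ ((htsub A hA hk).1))
      rw [nsmul_eq_mul] at h1
      have hsup0 : 0 ≤ sSup (f i '' A) := le_trans (hinf0 i A hA) (hinfle i A hA)
      calc ∑ k ∈ t A, f i k ≤ ((t A).card:ℝ) * sSup (f i '' A) := h1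
        _ ≤ ((N:ℝ) * Ξ A + 1) * sSup (f i '' A) :=
            mul_le_mul_of_nonneg_right (hnA_up A hA) hsup0
        _ = (N:ℝ) * (Ξ A * sSup (f i '' A)) + sSup (f i '' A) := by ring
        _ ≤ (N:ℝ) * (Ξ A * sSup (f i '' A)) + M := by linarith [hsupM i A hA]
    calc ∑ A ∈ S, ∑ k ∈ t A, f i k
        ≤ ∑ A ∈ S, ((N:ℝ) * (Ξ A * sSup (f i '' A)) + M) := Finset.sum_le_sum key
      _ = (N:ℝ) * (∑ A ∈ S, Ξ A * sSup (f i '' A)) + (m:ℝ) * M := by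
          rw [Finset.sum_add_distrib, ← Finset.mul_sum, Finset.sum_const, hmdef, nsmul_eq_mul]
  refine ⟨u, ?_, ?_, ?_⟩
  · obtain ⟨A, hA⟩ := hSnonempty
    have h1 : 0 < (t A).card := by
      rw [htcard A hA]
      exact Nat.ceil_pos.mpr (mul_pos hN0 (hSpos A hA))
    obtain ⟨k, hk⟩ := Finset.card_pos.mp h1
    exact ⟨k, Finset.mem_biUnion.mpr ⟨A, hA, hk⟩⟩
  · intro k hk hkF
    obtain ⟨A, hA, hkA⟩ := Finset.mem_biUnion.mp hk
    exact ((htsub A hA) hkA).2 (Finset.mem_coe.mpr hkF)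
  · intro i
    have hηδ : δ*η < ε/2 := by
      rw [hηdef, mul_div_assoc']
      rw [div_lt_div_iff₀ (by positivity) (by norm_num : (0:ℝ) < 2)]
      nlinarith
    exact endgame hε hδ hE hM0 hm0 hN0 hNbig hηδ hn_low hn_up
      (Finset.sum_nonneg (fun k _ => hfnn i k)) (hSg_low i) (hSg_up i)
      (hLlow i) (hUhigh i) (hULdiff i) (hA0 i)
      (le_trans (hAB i) (hBM i)) (le_trans (hA0 i) (hAB i))
end

section
/- Let P be a forcing poset, ⟨B_m : m < m*⟩ a finite partition of a set K, Ξ a finitely additive probability measure on P(K) with a_m := Ξ(B_m), r ∈ P, i* < ω, δ_i reals, and for each i < i* and each r' ≤ r a function f^i_{r'} : K → [0,1]. Let M = {m < m* : a_m > 0} and c_{i,m}(r') = (1/a_m)∫_{B_m} f^i_{r'} dΞ. Assume ∫_K f^i_{r'} dΞ ≥ δ_i for all r' ≤ r and i < i*. Then for every ε > 0 there exist r* ≤ r and reals c_{i,m} ∈ [0,1] (i < i*, m ∈ M) such that ∑_{m∈M} c_{i,m}·a_m ≥ δ_i for all i, r* belongs to D* := {r' ∈ P : ∀i<i* ∀m∈M,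 |c_{i,m}(r') − c_{i,m}| < ε}, and D* is dense below r*. -/
open scoped Classical

/-- The integral of a bounded function `f` with respect to a finitely additive measure `Ξ`
defined on all of `𝒫(K)`, Darboux-style: the supremum of the lower sums over finite
partitions of `K` (every bounded function is integrable in this case). -/
noncomputable def famInt {K : Type*} (Ξ : Set K → ℝ) (f : K → ℝ) : ℝ :=
  sSup {s | ∃ P : Finset (Set K),
    (∀ E ∈ P, ∀ F ∈ P, E ≠ F → E ∩ F = ∅) ∧ (⋃ E ∈ P, E) = Set.univ ∧
    s = ∑ E ∈ P, Ξ E * sInf (f '' E)}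

namespace Stmt16Aux

variable {K : Type*} {Ξ : Set K → ℝ}

/-- The set of lower sums. -/
def LS (Ξ : Set K → ℝ) (f : K → ℝ) : Set ℝ :=
  {s | ∃ P : Finset (Set K),
    (∀ E ∈ P, ∀ F ∈ P, E ≠ F → E ∩ F = ∅) ∧ (⋃ E ∈ P, E) = Set.univ ∧
    s = ∑ E ∈ P, Ξ E * sInf (f '' E)}

lemma famInt_eq (f : K → ℝ) : famInt Ξ f = sSup (LS Ξ f) := rfl

lemma indicator_mem_Icc {f : K → ℝ} (hf : ∀ k, f k ∈ Set.Icc (0:ℝ) 1) (Bs : Set K) :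
    ∀ k, Bs.indicator f k ∈ Set.Icc (0:ℝ) 1 := by
  intro k
  by_cases h : k ∈ Bs
  · rw [Set.indicator_of_mem h]; exact hf k
  · rw [Set.indicator_of_notMem h]; exact ⟨le_refl 0, zero_le_one⟩

lemma sInf_image_nonneg {f : K → ℝ} (hf : ∀ k, f k ∈ Set.Icc (0:ℝ) 1) (E : Set K) :
    0 ≤ sInf (f '' E) :=
  Real.sInf_nonneg (by rintro x ⟨k, -, rfl⟩; exact (hf k).1)

lemma sInf_image_le_one {f : K → ℝ} (hf : ∀ k, f k ∈ Set.Icc (0:ℝ) 1) (E : Set K) :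
    sInf (f '' E) ≤ 1 := by
  rcases E.eq_empty_or_nonempty with rfl | ⟨k, hk⟩
  · simp [Real.sInf_empty]
  · exact csInf_le_of_le ⟨0, by rintro x ⟨k', -, rfl⟩; exact (hf k').1⟩
      ⟨k, hk, rfl⟩ (hf k).2

lemma Xi_biUnion (hadd : ∀ A C : Set K, A ∩ C = ∅ → Ξ (A ∪ C) = Ξ A + Ξ C)
    (h0 : Ξ ∅ = 0) {ι : Type*} [DecidableEq ι] (s : Finset ι) (C : ι → Set K) :
    (∀ i ∈ s, ∀ j ∈ s, i ≠ j → C i ∩ C j = ∅) →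
    Ξ (⋃ i ∈ s, C i) = ∑ i ∈ s, Ξ (C i) := by
  induction s using Finset.induction_on with
  | empty => intro _; simp [h0]
  | @insert a s ha ih =>
    intro hd
    have h1 : C a ∩ ⋃ i ∈ s, C i = ∅ := by
      apply Set.eq_empty_iff_forall_notMem.mpr
      rintro x ⟨hxa, hxu⟩
      simp only [Set.mem_iUnion, exists_prop] at hxu
      obtain ⟨i, his, hxi⟩ := hxu
      have hne : a ≠ i := by rintro rfl; exact ha his
      have hdis := hd a (Finset.mem_insert_self a s) i (Finset.mem_insert_of_mem his) hne
      exact Set.eq_empty_iff_forall_notMem.mp hdis x ⟨hxa, hxi⟩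
    rw [Finset.set_biUnion_insert, hadd _ _ h1, Finset.sum_insert ha,
      ih (fun i hi j hj hij => hd i (Finset.mem_insert_of_mem hi) j (Finset.mem_insert_of_mem hj) hij)]

lemma Xi_mono (hnn : ∀ A : Set K, 0 ≤ Ξ A)
    (hadd : ∀ A C : Set K, A ∩ C = ∅ → Ξ (A ∪ C) = Ξ A + Ξ C)
    {A C : Set K} (h : A ⊆ C) : Ξ A ≤ Ξ C := by
  have h1 : A ∩ (C \ A) = ∅ := by ext x; simp only [Set.mem_inter_iff, Set.mem_diff,
    Set.mem_empty_iff_false, iff_false]; tauto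
  have h2 : A ∪ (C \ A) = C := Set.union_diff_cancel h
  calc Ξ A ≤ Ξ A + Ξ (C \ A) := le_add_of_nonneg_right (hnn _)
    _ = Ξ C := by rw [← hadd _ _ h1, h2]

lemma trivial_mem (f : K → ℝ) : Ξ Set.univ * sInf (f '' Set.univ) ∈ LS Ξ f := by
  refine ⟨{Set.univ}, ?_, by simp, by simp⟩
  intro E hE F hF hne
  rw [Finset.mem_singleton] at hE hF
  exact absurd (hE.trans hF.symm) hne

lemma LS_nonempty (f : K → ℝ) : (LS Ξ f).Nonempty := ⟨_, trivial_mem f⟩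

lemma LS_le_one (hnn : ∀ A : Set K, 0 ≤ Ξ A) (h0 : Ξ ∅ = 0)
    (hadd : ∀ A C : Set K, A ∩ C = ∅ → Ξ (A ∪ C) = Ξ A + Ξ C)
    (h1 : Ξ Set.univ = 1) {f : K → ℝ} (hf : ∀ k, f k ∈ Set.Icc (0:ℝ) 1) :
    ∀ s ∈ LS Ξ f, s ≤ 1 := by
  rintro s ⟨Q, hQd, hQu, rfl⟩
  have hsum : ∑ E ∈ Q, Ξ E = 1 := by
    have := Xi_biUnion hadd h0 Q (fun E => E) hQd
    rw [hQu, h1] at this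
    exact this.symm
  calc ∑ E ∈ Q, Ξ E * sInf (f '' E) ≤ ∑ E ∈ Q, Ξ E * 1 :=
      Finset.sum_le_sum fun E _ => mul_le_mul_of_nonneg_left (sInf_image_le_one hf E) (hnn E)
    _ = 1 := by simpa using hsum

lemma LS_bddAbove (hnn : ∀ A : Set K, 0 ≤ Ξ A) (h0 : Ξ ∅ = 0)
    (hadd : ∀ A C : Set K, A ∩ C = ∅ → Ξ (A ∪ C) = Ξ A + Ξ C)
    (h1 : Ξ Set.univ = 1) {f : K → ℝ} (hf : ∀ k, f k ∈ Set.Icc (0:ℝ) 1) :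
    BddAbove (LS Ξ f) :=
  ⟨1, fun _ hs => LS_le_one hnn h0 hadd h1 hf _ hs⟩

lemma famInt_nonneg (hnn : ∀ A : Set K, 0 ≤ Ξ A) (h0 : Ξ ∅ = 0)
    (hadd : ∀ A C : Set K, A ∩ C = ∅ → Ξ (A ∪ C) = Ξ A + Ξ C)
    (h1 : Ξ Set.univ = 1) {f : K → ℝ} (hf : ∀ k, f k ∈ Set.Icc (0:ℝ) 1) :
    0 ≤ famInt Ξ f := by
  have h2 : (0:ℝ) ≤ Ξ Set.univ * sInf (f '' Set.univ) :=
    mul_nonneg (hnn _) (sInf_image_nonneg hf _)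
  exact h2.trans (le_csSup (LS_bddAbove hnn h0 hadd h1 hf) (trivial_mem f))

lemma famInt_indicator_le (hnn : ∀ A : Set K, 0 ≤ Ξ A) (h0 : Ξ ∅ = 0)
    (hadd : ∀ A C : Set K, A ∩ C = ∅ → Ξ (A ∪ C) = Ξ A + Ξ C)
    (h1 : Ξ Set.univ = 1) {f : K → ℝ} (hf : ∀ k, f k ∈ Set.Icc (0:ℝ) 1) (Bs : Set K) :
    famInt Ξ (Bs.indicator f) ≤ Ξ Bs := by
  classical
  have hg : ∀ k, Bs.indicator f k ∈ Set.Icc (0:ℝ) 1 := indicator_mem_Icc hf Bs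
  rw [famInt_eq]
  apply csSup_le (LS_nonempty _)
  rintro s ⟨Q, hQd, hQu, rfl⟩
  have key : ∀ E ∈ Q, Ξ E * sInf (Bs.indicator f '' E) ≤ if E ⊆ Bs then Ξ E else 0 := by
    intro E _
    by_cases hEB : E ⊆ Bs
    · simp only [hEB, if_true]
      calc Ξ E * sInf (Bs.indicator f '' E) ≤ Ξ E * 1 :=
          mul_le_mul_of_nonneg_left (sInf_image_le_one hg E) (hnn E)
        _ = Ξ E := mul_one _
    · simp only [hEB, if_false]
      obtain ⟨x, hxE, hxB⟩ := Set.not_subset.mp hEB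
      have hle : sInf (Bs.indicator f '' E) ≤ 0 := by
        have hbb : BddBelow (Bs.indicator f '' E) := ⟨0, by rintro y ⟨k, -, rfl⟩; exact (hg k).1⟩
        have hmem : Bs.indicator f x ∈ Bs.indicator f '' E := ⟨x, hxE, rfl⟩
        have hval : Bs.indicator f x = 0 := Set.indicator_of_notMem hxB f
        exact csInf_le_of_le hbb hmem (le_of_eq hval)
      calc Ξ E * sInf (Bs.indicator f '' E) ≤ Ξ E * 0 :=
          mul_le_mul_of_nonneg_left hle (hnn E)
        _ = 0 := mul_zero _
  calc ∑ E ∈ Q, Ξ E * sInf (Bs.indicator f '' E)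
      ≤ ∑ E ∈ Q, (if E ⊆ Bs then Ξ E else 0) := Finset.sum_le_sum key
    _ = ∑ E ∈ Q.filter (fun E => E ⊆ Bs), Ξ E := (Finset.sum_filter _ _).symm
    _ = Ξ (⋃ E ∈ Q.filter (fun E => E ⊆ Bs), E) :=
        (Xi_biUnion hadd h0 _ (fun E => E)
          (fun E hE F hF hne => hQd E (Finset.mem_filter.mp hE).1 F (Finset.mem_filter.mp hF).1 hne)).symm
    _ ≤ Ξ Bs := Xi_mono hnn hadd
        (Set.iUnion₂_subset fun E hE => (Finset.mem_filter.mp hE).2)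

lemma per_m (hnn : ∀ A : Set K, 0 ≤ Ξ A) (h0 : Ξ ∅ = 0)
    (hadd : ∀ A C : Set K, A ∩ C = ∅ → Ξ (A ∪ C) = Ξ A + Ξ C)
    (h1 : Ξ Set.univ = 1) {f : K → ℝ} (hf : ∀ k, f k ∈ Set.Icc (0:ℝ) 1)
    (Bm : Set K) (Q : Finset (Set K))
    (hQd : ∀ E ∈ Q, ∀ F ∈ Q, E ≠ F → E ∩ F = ∅) (hQu : (⋃ E ∈ Q, E) = Set.univ) :
    ∑ E ∈ Q, Ξ (E ∩ Bm) * sInf (f '' E) ≤ famInt Ξ (Bm.indicator f) := by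
  classical
  set g := Bm.indicator f with hgdef
  have hg : ∀ k, g k ∈ Set.Icc (0:ℝ) 1 := indicator_mem_Icc hf Bm
  set Qm : Finset (Set K) := insert Bmᶜ (Q.image (· ∩ Bm)) with hQm
  have hQmd : ∀ E ∈ Qm, ∀ F ∈ Qm, E ≠ F → E ∩ F = ∅ := by
    intro E hE F hF hne
    simp only [hQm, Finset.mem_insert, Finset.mem_image] at hE hF
    rcases hE with rfl | ⟨E', hE', rfl⟩ <;> rcases hF with rfl | ⟨F', hF', rfl⟩
    · exact absurd rfl hne
    · ext x
      simp only [Set.mem_inter_iff, Set.mem_compl_iff, Set.mem_empty_iff_false, iff_false]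
      rintro ⟨hx, -, hx2⟩; exact hx hx2
    · ext x
      simp only [Set.mem_inter_iff, Set.mem_compl_iff, Set.mem_empty_iff_false, iff_false]
      rintro ⟨⟨-, hx2⟩, hx⟩; exact hx hx2
    · have hne' : E' ≠ F' := by rintro rfl; exact hne rfl
      have hd := hQd E' hE' F' hF' hne'
      apply Set.eq_empty_of_subset_empty; rw [← hd]
      rintro x ⟨⟨hx1, -⟩, hx2, -⟩; exact ⟨hx1, hx2⟩
  have hQmu : (⋃ E ∈ Qm, E) = Set.univ := by
    apply Set.eq_univ_of_forall; intro x
    by_cases hx : x ∈ Bm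
    · have hxu : x ∈ ⋃ E ∈ Q, E := hQu ▸ Set.mem_univ x
      simp only [Set.mem_iUnion, exists_prop] at hxu
      obtain ⟨E, hE, hxE⟩ := hxu
      simp only [Set.mem_iUnion, exists_prop]
      refine ⟨E ∩ Bm, ?_, ⟨hxE, hx⟩⟩
      simp only [hQm, Finset.mem_insert, Finset.mem_image]
      exact Or.inr ⟨E, hE, rfl⟩
    · simp only [Set.mem_iUnion, exists_prop]
      refine ⟨Bmᶜ, ?_, hx⟩
      simp [hQm]
  have hmem : ∑ F ∈ Qm, Ξ F * sInf (g '' F) ∈ LS Ξ g := ⟨Qm, hQmd, hQmu, rfl⟩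
  have hle2 : ∑ F ∈ Qm, Ξ F * sInf (g '' F) ≤ famInt Ξ g :=
    le_csSup (LS_bddAbove hnn h0 hadd h1 hg) hmem
  refine le_trans ?_ hle2
  set Q' := Q.filter (fun E => (E ∩ Bm).Nonempty) with hQ'
  have hzero : ∑ E ∈ Q, Ξ (E ∩ Bm) * sInf (f '' E) = ∑ E ∈ Q', Ξ (E ∩ Bm) * sInf (f '' E) := by
    symm; apply Finset.sum_subset (Finset.filter_subset _ _)
    intro E hE hE'
    have hemp : E ∩ Bm = ∅ := by
      by_contra h
      exact hE' (Finset.mem_filter.mpr ⟨hE, Set.nonempty_iff_ne_empty.mpr h⟩)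
    rw [hemp, h0, zero_mul]
  rw [hzero]
  have hinj : ∀ E ∈ Q', ∀ F ∈ Q', E ∩ Bm = F ∩ Bm → E = F := by
    intro E hE F hF hEF
    by_contra hne
    have hd := hQd E (Finset.mem_filter.mp hE).1 F (Finset.mem_filter.mp hF).1 hne
    obtain ⟨x, hx⟩ := (Finset.mem_filter.mp hE).2
    have hx' : x ∈ F ∩ Bm := hEF ▸ hx
    exact Set.eq_empty_iff_forall_notMem.mp hd x ⟨hx.1, hx'.1⟩
  have hstep : ∀ E ∈ Q', Ξ (E ∩ Bm) * sInf (f '' E) ≤ Ξ (E ∩ Bm) * sInf (g '' (E ∩ Bm)) := by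
    intro E hE
    apply mul_le_mul_of_nonneg_left _ (hnn _)
    have himg : g '' (E ∩ Bm) = f '' (E ∩ Bm) :=
      Set.image_congr fun x hx => Set.indicator_of_mem hx.2 f
    rw [himg]
    exact csInf_le_csInf ⟨0, by rintro y ⟨k, -, rfl⟩; exact (hf k).1⟩
      (((Finset.mem_filter.mp hE).2).image f)
      (Set.image_mono (f := f) Set.inter_subset_left)
  calc ∑ E ∈ Q', Ξ (E ∩ Bm) * sInf (f '' E)
      ≤ ∑ E ∈ Q', Ξ (E ∩ Bm) * sInf (g '' (E ∩ Bm)) := Finset.sum_le_sum hstep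
    _ = ∑ F ∈ Q'.image (· ∩ Bm), Ξ F * sInf (g '' F) := (Finset.sum_image (f := fun F => Ξ F * sInf (g '' F)) hinj).symm
    _ ≤ ∑ F ∈ Qm, Ξ F * sInf (g '' F) := by
        apply Finset.sum_le_sum_of_subset_of_nonneg
        · intro F hF
          simp only [hQm, Finset.mem_insert]
          exact Or.inr (Finset.image_subset_image (Finset.filter_subset _ _) hF)
        · intro F _ _
          exact mul_nonneg (hnn F) (sInf_image_nonneg hg F)

lemma famInt_le_sum_indicator (hnn : ∀ A : Set K, 0 ≤ Ξ A) (h0 : Ξ ∅ = 0)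
    (hadd : ∀ A C : Set K, A ∩ C = ∅ → Ξ (A ∪ C) = Ξ A + Ξ C)
    (h1 : Ξ Set.univ = 1) {mstar : ℕ} (B : Fin mstar → Set K)
    (hdisj : ∀ m m', m ≠ m' → B m ∩ B m' = ∅) (hcov : (⋃ m, B m) = Set.univ)
    {f : K → ℝ} (hf : ∀ k, f k ∈ Set.Icc (0:ℝ) 1) :
    famInt Ξ f ≤ ∑ m : Fin mstar, famInt Ξ ((B m).indicator f) := by
  classical
  rw [famInt_eq]
  apply csSup_le (LS_nonempty _)
  rintro s ⟨Q, hQd, hQu, rfl⟩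
  have hE_split : ∀ E : Set K, Ξ E = ∑ m : Fin mstar, Ξ (E ∩ B m) := by
    intro E
    have hdis : ∀ i ∈ (Finset.univ : Finset (Fin mstar)), ∀ j ∈ Finset.univ, i ≠ j →
        (E ∩ B i) ∩ (E ∩ B j) = ∅ := by
      intro i _ j _ hij
      apply Set.eq_empty_of_subset_empty
      rw [← hdisj i j hij]
      rintro x ⟨⟨-, hx1⟩, -, hx2⟩; exact ⟨hx1, hx2⟩
    have := Xi_biUnion hadd h0 (Finset.univ : Finset (Fin mstar)) (fun m => E ∩ B m) hdis
    have hu : (⋃ m ∈ (Finset.univ : Finset (Fin mstar)), (E ∩ B m)) = E := by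
      simp only [Finset.mem_univ, Set.iUnion_true]
      rw [← Set.inter_iUnion, hcov, Set.inter_univ]
    rw [hu] at this
    exact this
  calc ∑ E ∈ Q, Ξ E * sInf (f '' E)
      = ∑ E ∈ Q, ∑ m : Fin mstar, Ξ (E ∩ B m) * sInf (f '' E) := by
        refine Finset.sum_congr rfl fun E _ => ?_
        rw [hE_split E, Finset.sum_mul]
    _ = ∑ m : Fin mstar, ∑ E ∈ Q, Ξ (E ∩ B m) * sInf (f '' E) := Finset.sum_comm
    _ ≤ ∑ m : Fin mstar, famInt Ξ ((B m).indicator f) :=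
        Finset.sum_le_sum fun m _ => per_m hnn h0 hadd h1 hf (B m) Q hQd hQu

lemma dense_below {P : Type*} [Preorder P] {T : Type*} (g : P → T) (r : P)
    (hfin : {t | ∃ q ≤ r, g q = t}.Finite) :
    ∃ rstar ≤ r, ∀ q ≤ rstar, ∃ r' ≤ q, g r' = g rstar := by
  classical
  have key : ∀ n : ℕ, ∀ q, q ≤ r → ({t | ∃ p ≤ q, g p = t}).ncard ≤ n →
      ∃ rstar ≤ q, ∀ q' ≤ rstar, ∃ r' ≤ q', g r' = g rstar := by
    intro n
    induction n with
    | zero =>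
      intro q hq hcard
      exfalso
      have hfq : {t | ∃ p ≤ q, g p = t}.Finite :=
        hfin.subset fun t ⟨p, hp, he⟩ => ⟨p, hp.trans hq, he⟩
      have hpos : 0 < ({t | ∃ p ≤ q, g p = t}).ncard :=
        (Set.ncard_pos hfq).mpr ⟨g q, q, le_refl q, rfl⟩
      omega
    | succ n ih =>
      intro q hq hcard
      by_cases hgood : ∀ q' ≤ q, ∃ r' ≤ q', g r' = g q
      · exact ⟨q, le_refl q, hgood⟩
      · push_neg at hgood
        obtain ⟨q', hq'q, hno⟩ := hgood
        have hsub : {t | ∃ p ≤ q', g p = t} ⊆ {t | ∃ p ≤ q, g p = t} \ {g q} := by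
          rintro t ⟨p, hp, rfl⟩
          exact ⟨⟨p, hp.trans hq'q, rfl⟩, hno p hp⟩
        have hfq : {t | ∃ p ≤ q, g p = t}.Finite :=
          hfin.subset fun t ⟨p, hp, he⟩ => ⟨p, hp.trans hq, he⟩
        have hlt : ({t | ∃ p ≤ q', g p = t}).ncard ≤ n := by
          have hle1 : ({t | ∃ p ≤ q', g p = t}).ncard ≤ ({t | ∃ p ≤ q, g p = t} \ {g q}).ncard :=
            Set.ncard_le_ncard hsub hfq.diff
          have hlt2 : ({t | ∃ p ≤ q, g p = t} \ {g q}).ncard < ({t | ∃ p ≤ q, g p = t}).ncard :=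
            Set.ncard_diff_singleton_lt_of_mem ⟨q, le_refl q, rfl⟩ hfq
          omega
        obtain ⟨rs, hrs, hrsg⟩ := ih q' (hq'q.trans hq) hlt
        exact ⟨rs, hrs.trans hq'q, hrsg⟩
  exact key ({t | ∃ q ≤ r, g q = t}).ncard r (le_refl r) (le_refl _)

lemma abs_sub_lt_of_floor_eq {ε x y : ℝ} (hε : 0 < ε) (h : ⌊x/ε⌋ = ⌊y/ε⌋) :
    |x - y| < ε := by
  have hx1 : x/ε < ⌊x/ε⌋ + 1 := Int.lt_floor_add_one _
  have hy1 : y/ε < ⌊y/ε⌋ + 1 := Int.lt_floor_add_one _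
  have hx2 : (⌊x/ε⌋:ℝ) ≤ x/ε := Int.floor_le _
  have hy2 : (⌊y/ε⌋:ℝ) ≤ y/ε := Int.floor_le _
  rw [abs_sub_lt_iff]
  constructor
  · have hd : x/ε - y/ε < 1 := by rw [h] at hx1; push_cast at hx1 hy2 ⊢; linarith
    calc x - y = (x/ε - y/ε) * ε := by
          rw [sub_mul, div_mul_cancel₀ _ hε.ne', div_mul_cancel₀ _ hε.ne']
      _ < 1 * ε := mul_lt_mul_of_pos_right hd hε
      _ = ε := one_mul ε
  · have hd : y/ε - x/ε < 1 := by rw [← h] at hy1; push_cast at hy1 hx2 ⊢; linarith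
    calc y - x = (y/ε - x/ε) * ε := by
          rw [sub_mul, div_mul_cancel₀ _ hε.ne', div_mul_cancel₀ _ hε.ne']
      _ < 1 * ε := mul_lt_mul_of_pos_right hd hε
      _ = ε := one_mul ε

end Stmt16Aux

/-- Stabilization of the conditional averages `c_{i,m}(r') = (1/Ξ(B m)) ∫_{B m} f^i_{r'} dΞ`:
if `∫_K f^i_{r'} dΞ ≥ δ i` for all `r' ≤ r`, then for every `ε > 0` there are `r* ≤ r` and
reals `c i m ∈ [0,1]` with `∑_{m ∈ M} c i m · Ξ(B m) ≥ δ i`, such that `r*` lies in the set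
`D* = {r' : ∀ i, ∀ m ∈ M, |c_{i,m}(r') − c i m| < ε}` and `D*` is dense below `r*`. -/
theorem stmt16 {P : Type*} [Preorder P] {K : Type*}
    (Ξ : Set K → ℝ) (hnn : ∀ A : Set K, 0 ≤ Ξ A) (h0 : Ξ ∅ = 0)
    (hadd : ∀ A C : Set K, A ∩ C = ∅ → Ξ (A ∪ C) = Ξ A + Ξ C)
    (h1 : Ξ Set.univ = 1)
    (mstar : ℕ) (B : Fin mstar → Set K)
    (hdisj : ∀ m m', m ≠ m' → B m ∩ B m' = ∅) (hcov : (⋃ m, B m) = Set.univ)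
    (r : P) (istar : ℕ) (δ : Fin istar → ℝ)
    (f : Fin istar → P → K → ℝ)
    (hfrange : ∀ i, ∀ r' ≤ r, ∀ k, f i r' k ∈ Set.Icc (0 : ℝ) 1)
    (hlow : ∀ r' ≤ r, ∀ i, δ i ≤ famInt Ξ (f i r')) :
    ∀ ε : ℝ, 0 < ε → ∃ rstar ≤ r, ∃ c : Fin istar → Fin mstar → ℝ,
      (∀ i m, 0 < Ξ (B m) → c i m ∈ Set.Icc (0 : ℝ) 1) ∧
      (∀ i, δ i ≤ ∑ m ∈ Finset.univ.filter (fun m => 0 < Ξ (B m)), c i m * Ξ (B m)) ∧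
      (∀ i m, 0 < Ξ (B m) →
        |(Ξ (B m))⁻¹ * famInt Ξ ((B m).indicator (f i rstar)) - c i m| < ε) ∧
      (∀ q ≤ rstar, ∃ r' ≤ q, ∀ i m, 0 < Ξ (B m) →
        |(Ξ (B m))⁻¹ * famInt Ξ ((B m).indicator (f i r')) - c i m| < ε) := by
  classical
  intro ε hε
  -- the "cell" function
  set g : P → Fin istar → Fin mstar → ℤ :=
    fun q i m => ⌊((Ξ (B m))⁻¹ * famInt Ξ ((B m).indicator (f i q))) / ε⌋ with hg
  -- basic range facts for the conditional averages
  have hv01 : ∀ (q : P), q ≤ r → ∀ i m, 0 < Ξ (B m) →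
      (Ξ (B m))⁻¹ * famInt Ξ ((B m).indicator (f i q)) ∈ Set.Icc (0:ℝ) 1 := by
    intro q hq i m hm
    constructor
    · exact mul_nonneg (inv_nonneg.mpr (hnn _))
        (Stmt16Aux.famInt_nonneg hnn h0 hadd h1
          (Stmt16Aux.indicator_mem_Icc (hfrange i q hq) (B m)))
    · calc (Ξ (B m))⁻¹ * famInt Ξ ((B m).indicator (f i q))
          ≤ (Ξ (B m))⁻¹ * Ξ (B m) :=
            mul_le_mul_of_nonneg_left
              (Stmt16Aux.famInt_indicator_le hnn h0 hadd h1 (hfrange i q hq) (B m))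
              (inv_nonneg.mpr (hnn _))
        _ = 1 := inv_mul_cancel₀ (ne_of_gt hm)
  -- finiteness of the set of cells below r
  have hfin : {t | ∃ q ≤ r, g q = t}.Finite := by
    apply Set.Finite.subset
      (Set.Finite.pi (fun i : Fin istar =>
        Set.Finite.pi (fun m : Fin mstar => Set.finite_Icc (0:ℤ) ⌊1/ε⌋)))
    rintro t ⟨q, hq, rfl⟩
    intro i _ m _
    simp only [Set.mem_Icc]
    rcases eq_or_lt_of_le (hnn (B m)) with hm | hm
    · have hzero : g q i m = 0 := by
        simp [hg, ← hm]
      rw [hzero]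
      exact ⟨le_refl 0, Int.floor_nonneg.mpr (by positivity)⟩
    · obtain ⟨hv0, hv1⟩ := hv01 q hq i m hm
      constructor
      · exact Int.floor_nonneg.mpr (div_nonneg hv0 hε.le)
      · exact Int.floor_le_floor (by gcongr)
  obtain ⟨rstar, hrstar, hdense⟩ := Stmt16Aux.dense_below g r hfin
  set c : Fin istar → Fin mstar → ℝ :=
    fun i m => (Ξ (B m))⁻¹ * famInt Ξ ((B m).indicator (f i rstar)) with hc
  refine ⟨rstar, hrstar, c, ?_, ?_, ?_, ?_⟩
  · intro i m hm
    exact hv01 rstar hrstar i m hm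
  · intro i
    have hsum_eq : ∑ m ∈ Finset.univ.filter (fun m => 0 < Ξ (B m)), c i m * Ξ (B m)
        = ∑ m : Fin mstar, famInt Ξ ((B m).indicator (f i rstar)) := by
      rw [Finset.sum_subset (Finset.filter_subset _ _)
        (fun m _ hm => by
          have hm0 : Ξ (B m) = 0 := le_antisymm
            (not_lt.mp (by simpa using hm)) (hnn _)
          rw [hm0, mul_zero])]
      refine Finset.sum_congr rfl fun m _ => ?_
      by_cases hm : 0 < Ξ (B m)
      · simp only [hc]
        rw [mul_comm ((Ξ (B m))⁻¹) _, mul_assoc, inv_mul_cancel₀ (ne_of_gt hm), mul_one]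
      · have hm0 : Ξ (B m) = 0 := le_antisymm (not_lt.mp hm) (hnn _)
        have hle : famInt Ξ ((B m).indicator (f i rstar)) ≤ 0 := by
          rw [← hm0]
          exact Stmt16Aux.famInt_indicator_le hnn h0 hadd h1 (hfrange i rstar hrstar) (B m)
        have hge : 0 ≤ famInt Ξ ((B m).indicator (f i rstar)) :=
          Stmt16Aux.famInt_nonneg hnn h0 hadd h1
            (Stmt16Aux.indicator_mem_Icc (hfrange i rstar hrstar) (B m))
        rw [hm0, mul_zero, le_antisymm hle hge]
    rw [hsum_eq]
    exact (hlow rstar hrstar i).trans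
      (Stmt16Aux.famInt_le_sum_indicator hnn h0 hadd h1 B hdisj hcov (hfrange i rstar hrstar))
  · intro i m _
    have : (Ξ (B m))⁻¹ * famInt Ξ ((B m).indicator (f i rstar)) - c i m = 0 := by
      simp only [hc]; ring
    rw [this, abs_zero]
    exact hε
  · intro q hq
    obtain ⟨r', hr'q, hgr⟩ := hdense q hq
    refine ⟨r', hr'q, fun i m hm => ?_⟩
    have hfl : ⌊((Ξ (B m))⁻¹ * famInt Ξ ((B m).indicator (f i r'))) / ε⌋
        = ⌊((Ξ (B m))⁻¹ * famInt Ξ ((B m).indicator (f i rstar))) / ε⌋ := by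
      have := congrFun (congrFun hgr i) m
      simpa [hg] using this
    simp only [hc]
    exact Stmt16Aux.abs_sub_lt_of_floor_eq hε hfl
end

section
/- Let B be a σ-complete Boolean algebra with a strictly positive (σ-additive) probability measure μ, K a nonempty set with a finitely additive probability measure Ξ on P(K), and ⟨P_k : k ∈ K⟩ a partition of a set W into nonempty finite sets. Let δ ∈ [0,1], r* ∈ B⁺, and b_ℓ ∈ B (ℓ ∈ W) with μ(b_ℓ ∧ r*)/μ(r*) ≥ δ for all ℓ. Then there exists r⊗ ≤ r*, r⊗ ≠ 0, such that for every nonzero r ≤ r⊗, ∫_K f_r dΞ ≥ δ, where f_r(k) = (1/|P_k|)∑_{ℓ∈P_k} μ(b_ℓ ∧ r)/μ(r). -/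
open Finset Pointwise

section Helpers
variable {K : Type*}


variable {K : Type*}

lemma Xi_biUnion (Ξ : Set K → ℝ) (hΞ0 : Ξ ∅ = 0)
    (hΞadd : ∀ A C : Set K, A ∩ C = ∅ → Ξ (A ∪ C) = Ξ A + Ξ C)
    {ι : Type*} (J : Finset ι) (C : ι → Set K)
    (hd : ∀ i ∈ J, ∀ j ∈ J, i ≠ j → C i ∩ C j = ∅) :
    Ξ (⋃ j ∈ J, C j) = ∑ j ∈ J, Ξ (C j) := by
  classical
  induction J using Finset.induction with
  | empty => simpa using hΞ0
  | @insert a J ha ih =>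
      have hdis : C a ∩ ⋃ j ∈ J, C j = ∅ := by
        ext x
        simp only [Set.mem_inter_iff, Set.mem_iUnion, Set.mem_empty_iff_false, iff_false,
          not_and, not_exists]
        rintro hxa j hj hxj
        have hne : a ≠ j := by rintro rfl; exact ha hj
        have := hd a (mem_insert_self a J) j (mem_insert_of_mem hj) hne
        rw [Set.eq_empty_iff_forall_notMem] at this
        exact this x ⟨hxa, hxj⟩
      rw [Finset.set_biUnion_insert, hΞadd _ _ hdis, Finset.sum_insert ha,
        ih (fun i hi j hj hij => hd i (mem_insert_of_mem hi) j (mem_insert_of_mem hj) hij)]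

section famIntLemmas
variable (Ξ : Set K → ℝ) (hΞnn : ∀ A : Set K, 0 ≤ Ξ A) (hΞ0 : Ξ ∅ = 0)
  (hΞadd : ∀ A C : Set K, A ∩ C = ∅ → Ξ (A ∪ C) = Ξ A + Ξ C)
  (hΞ1 : Ξ Set.univ = 1)

include hΞnn hΞ0 hΞadd hΞ1 in
lemma lowerSum_le_bound (f : K → ℝ) (M : ℝ) (hM : 0 ≤ M)
    (hf0 : ∀ k, 0 ≤ f k) (hfM : ∀ k, f k ≤ M)
    {P : Finset (Set K)} (hPd : ∀ E ∈ P, ∀ F ∈ P, E ≠ F → E ∩ F = ∅)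
    (hPc : (⋃ E ∈ P, E) = Set.univ) :
    ∑ E ∈ P, Ξ E * sInf (f '' E) ≤ M := by
  have hsum : ∑ E ∈ P, Ξ E = 1 := by
    have h := Xi_biUnion Ξ hΞ0 hΞadd P id hPd
    simpa [hPc, hΞ1] using h.symm
  calc ∑ E ∈ P, Ξ E * sInf (f '' E) ≤ ∑ E ∈ P, Ξ E * M := by
        refine Finset.sum_le_sum fun E hE => ?_
        refine mul_le_mul_of_nonneg_left ?_ (hΞnn E)
        rcases Set.eq_empty_or_nonempty E with rfl | ⟨x, hx⟩
        · simpa [Real.sInf_empty] using hM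
        · exact le_trans (csInf_le ⟨0, by rintro y ⟨k, _, rfl⟩; exact hf0 k⟩
            (Set.mem_image_of_mem f hx)) (hfM x)
    _ = M := by rw [← Finset.sum_mul, hsum, one_mul]

include hΞnn hΞ0 hΞadd hΞ1 in
lemma famInt_le_bound (f : K → ℝ) (M : ℝ) (hM : 0 ≤ M)
    (hf0 : ∀ k, 0 ≤ f k) (hfM : ∀ k, f k ≤ M) : famInt Ξ f ≤ M := by
  refine Real.sSup_le ?_ hM
  rintro s ⟨P, hPd, hPc, rfl⟩
  exact lowerSum_le_bound Ξ hΞnn hΞ0 hΞadd hΞ1 f M hM hf0 hfM hPd hPc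

include hΞnn hΞ0 hΞadd hΞ1 in
lemma bddAbove_famIntSet (f : K → ℝ) (M : ℝ) (hM : 0 ≤ M)
    (hf0 : ∀ k, 0 ≤ f k) (hfM : ∀ k, f k ≤ M) :
    BddAbove {s | ∃ P : Finset (Set K),
      (∀ E ∈ P, ∀ F ∈ P, E ≠ F → E ∩ F = ∅) ∧ (⋃ E ∈ P, E) = Set.univ ∧
      s = ∑ E ∈ P, Ξ E * sInf (f '' E)} := by
  refine ⟨M, ?_⟩
  rintro s ⟨P, hPd, hPc, rfl⟩
  exact lowerSum_le_bound Ξ hΞnn hΞ0 hΞadd hΞ1 f M hM hf0 hfM hPd hPc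

include hΞ1 in
lemma sInf_univ_mem_famIntSet (f : K → ℝ) :
    sInf (f '' Set.univ) ∈ {s | ∃ P : Finset (Set K),
      (∀ E ∈ P, ∀ F ∈ P, E ≠ F → E ∩ F = ∅) ∧ (⋃ E ∈ P, E) = Set.univ ∧
      s = ∑ E ∈ P, Ξ E * sInf (f '' E)} := by
  refine ⟨{Set.univ}, ?_, by simp, ?_⟩
  · intro E hE F hF hEF
    simp only [Finset.mem_singleton] at hE hF
    exact absurd (hE.trans hF.symm) hEF
  · simp [hΞ1]

include hΞnn hΞ0 hΞadd hΞ1 in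
lemma le_famInt (hK : Nonempty K) (f : K → ℝ) (M : ℝ) (hM : 0 ≤ M)
    (hf0 : ∀ k, 0 ≤ f k) (hfM : ∀ k, f k ≤ M) (c : ℝ) (hc : ∀ k, c ≤ f k) :
    c ≤ famInt Ξ f := by
  have h1 : c ≤ sInf (f '' Set.univ) := by
    refine le_csInf (by simpa using Set.Nonempty.of_subtype) ?_
    · rintro y ⟨k, _, rfl⟩; exact hc k
  exact h1.trans (le_csSup (bddAbove_famIntSet Ξ hΞnn hΞ0 hΞadd hΞ1 f M hM hf0 hfM)
    (sInf_univ_mem_famIntSet Ξ hΞ1 f))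

end famIntLemmas

lemma indexed_lowerSum_le_famInt (Ξ : Set K → ℝ) (hΞnn : ∀ A : Set K, 0 ≤ Ξ A)
    (hΞ0 : Ξ ∅ = 0)
    (hΞadd : ∀ A C : Set K, A ∩ C = ∅ → Ξ (A ∪ C) = Ξ A + Ξ C)
    (hΞ1 : Ξ Set.univ = 1)
    {ι : Type*} (J : Finset ι) (C : ι → Set K)
    (hd : ∀ i ∈ J, ∀ j ∈ J, i ≠ j → C i ∩ C j = ∅)
    (hc : (⋃ j ∈ J, C j) = Set.univ)
    (f : K → ℝ) (M : ℝ) (hM : 0 ≤ M) (hf0 : ∀ k, 0 ≤ f k) (hfM : ∀ k, f k ≤ M) :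
    ∑ j ∈ J, Ξ (C j) * sInf (f '' C j) ≤ famInt Ξ f := by
  classical
  set term : Set K → ℝ := fun E => Ξ E * sInf (f '' E) with hterm
  set J1 : Finset ι := J.filter (fun j => C j ≠ ∅) with hJ1
  have hinj : ∀ x ∈ J1, ∀ y ∈ J1, C x = C y → x = y := by
    intro x hx y hy hxy
    by_contra hne
    have h := hd x (Finset.mem_of_mem_filter x hx) y (Finset.mem_of_mem_filter y hy) hne
    rw [hxy, Set.inter_self] at h
    exact (Finset.mem_filter.mp hy).2 h
  have h1 : ∑ j ∈ J, term (C j) = ∑ j ∈ J1, term (C j) := by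
    refine (Finset.sum_subset (Finset.filter_subset _ _) ?_).symm
    intro x hx hx1
    have : C x = ∅ := by
      by_contra hne
      exact hx1 (Finset.mem_filter.mpr ⟨hx, hne⟩)
    simp [hterm, this, hΞ0]
  have h2 : ∑ j ∈ J1, term (C j) = ∑ E ∈ J1.image C, term E :=
    (Finset.sum_image hinj).symm
  -- the image is a valid partition once we add back the empty set if needed;
  -- in fact we use Q = J.image C
  have h3 : ∑ E ∈ J1.image C, term E = ∑ E ∈ J.image C, term E := by
    refine Finset.sum_subset (Finset.image_subset_image (Finset.filter_subset _ _)) ?_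
    intro E hE hE1
    obtain ⟨j, hj, rfl⟩ := Finset.mem_image.mp hE
    have : C j = ∅ := by
      by_contra hne
      exact hE1 (Finset.mem_image.mpr ⟨j, Finset.mem_filter.mpr ⟨hj, hne⟩, rfl⟩)
    simp [hterm, this, hΞ0]
  rw [h1, h2, h3]
  refine le_csSup (bddAbove_famIntSet Ξ hΞnn hΞ0 hΞadd hΞ1 f M hM hf0 hfM) ?_
  refine ⟨J.image C, ?_, ?_, rfl⟩
  · intro E hE F hF hEF
    obtain ⟨i, hi, rfl⟩ := Finset.mem_image.mp hE
    obtain ⟨j, hj, rfl⟩ := Finset.mem_image.mp hF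
    exact hd i hi j hj (by rintro rfl; exact hEF rfl)
  · rw [← hc]; ext x; simp

lemma famInt_add_le (Ξ : Set K → ℝ) (hΞnn : ∀ A : Set K, 0 ≤ Ξ A)
    (hΞ0 : Ξ ∅ = 0)
    (hΞadd : ∀ A C : Set K, A ∩ C = ∅ → Ξ (A ∪ C) = Ξ A + Ξ C)
    (hΞ1 : Ξ Set.univ = 1) (hK : Nonempty K)
    (f g : K → ℝ) (Mf Mg : ℝ) (hMf : 0 ≤ Mf) (hMg : 0 ≤ Mg)
    (hf0 : ∀ k, 0 ≤ f k) (hfM : ∀ k, f k ≤ Mf)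
    (hg0 : ∀ k, 0 ≤ g k) (hgM : ∀ k, g k ≤ Mg) :
    famInt Ξ (fun k => f k + g k) ≤ famInt Ξ f + famInt Ξ g := by
  classical
  have hIf0 : (0:ℝ) ≤ famInt Ξ f :=
    le_famInt Ξ hΞnn hΞ0 hΞadd hΞ1 hK f Mf hMf hf0 hfM 0 hf0
  have hIg0 : (0:ℝ) ≤ famInt Ξ g :=
    le_famInt Ξ hΞnn hΞ0 hΞadd hΞ1 hK g Mg hMg hg0 hgM 0 hg0
  refine Real.sSup_le ?_ (by linarith)
  rintro s ⟨P, hPd, hPc, rfl⟩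
  refine le_of_forall_pos_le_add ?_
  intro ε hε
  -- choose N with Mg < N * ε
  obtain ⟨N, hN⟩ : ∃ N : ℕ, Mg < N * ε := by
    obtain ⟨N, hN⟩ := exists_nat_gt (Mg / ε)
    exact ⟨N, by rwa [div_lt_iff₀ hε] at hN⟩
  set A : ℕ → Set K := fun i => {k | (i:ℝ) * ε ≤ g k ∧ g k < ((i:ℝ)+1) * ε} with hA
  have hAdisj : ∀ i j : ℕ, i ≠ j → A i ∩ A j = ∅ := by
    have key : ∀ i j : ℕ, i < j → A i ∩ A j = ∅ := by
      intro i j hij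
      ext x
      simp only [hA, Set.mem_inter_iff, Set.mem_setOf_eq, Set.mem_empty_iff_false, iff_false]
      rintro ⟨⟨_, h2⟩, h3, _⟩
      have : ((i:ℝ)+1) * ε ≤ (j:ℝ) * ε := by
        have : ((i:ℝ)+1) ≤ (j:ℝ) := by exact_mod_cast hij
        exact mul_le_mul_of_nonneg_right this hε.le
      linarith
    intro i j hij
    rcases hij.lt_or_gt with h | h
    · exact key i j h
    · rw [Set.inter_comm]; exact key j i h
  have hAcov : (⋃ i ∈ Finset.range N, A i) = Set.univ := by
    ext k
    simp only [Set.mem_iUnion, Set.mem_univ, iff_true]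
    have hgk0 : 0 ≤ g k / ε := div_nonneg (hg0 k) hε.le
    refine ⟨⌊g k / ε⌋₊, ?_, ?_, ?_⟩
    · rw [Finset.mem_range, Nat.floor_lt hgk0]
      rw [div_lt_iff₀ hε]
      exact lt_of_le_of_lt (hgM k) hN
    · rw [← le_div_iff₀ hε]
      exact Nat.floor_le hgk0
    · rw [← div_lt_iff₀ hε]
      exact Nat.lt_floor_add_one _
  -- refined partition indexed by P ×ˢ range N
  set C : Set K × ℕ → Set K := fun p => p.1 ∩ A p.2 with hC
  have hCd : ∀ p ∈ P ×ˢ Finset.range N, ∀ q ∈ P ×ˢ Finset.range N, p ≠ q → C p ∩ C q = ∅ := by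
    rintro ⟨E, i⟩ hp ⟨F, j⟩ hq hpq
    rw [Finset.mem_product] at hp hq
    rcases eq_or_ne E F with rfl | hEF
    · have hij : i ≠ j := by rintro rfl; exact hpq rfl
      have := hAdisj i j hij
      apply Set.eq_empty_of_subset_empty
      rw [← this]
      intro x hx
      exact ⟨hx.1.2, hx.2.2⟩
    · have := hPd E hp.1 F hq.1 hEF
      apply Set.eq_empty_of_subset_empty
      rw [← this]
      intro x hx
      exact ⟨hx.1.1, hx.2.1⟩
  have hCc : (⋃ p ∈ P ×ˢ Finset.range N, C p) = Set.univ := by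
    ext k
    simp only [Set.mem_iUnion, Set.mem_univ, iff_true]
    have hk1 : k ∈ ⋃ E ∈ P, E := hPc ▸ Set.mem_univ k
    have hk2 : k ∈ ⋃ i ∈ Finset.range N, A i := hAcov ▸ Set.mem_univ k
    simp only [Set.mem_iUnion] at hk1 hk2
    obtain ⟨E, hE, hkE⟩ := hk1
    obtain ⟨i, hi, hkA⟩ := hk2
    exact ⟨(E, i), Finset.mem_product.mpr ⟨hE, hi⟩, hkE, hkA⟩
  -- Ξ E = ∑ i Ξ (E ∩ A i)
  have hXiE : ∀ E ∈ P, Ξ E = ∑ i ∈ Finset.range N, Ξ (E ∩ A i) := by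
    intro E hE
    have hcov : (⋃ i ∈ Finset.range N, E ∩ A i) = E := by
      have : (⋃ i ∈ Finset.range N, E ∩ A i) = E ∩ ⋃ i ∈ Finset.range N, A i := by
        ext x; simp only [Set.mem_iUnion, Set.mem_inter_iff]; tauto
      rw [this, hAcov, Set.inter_univ]
    have := Xi_biUnion Ξ hΞ0 hΞadd (Finset.range N) (fun i => E ∩ A i)
      (fun i hi j hj hij => by
        apply Set.eq_empty_of_subset_empty
        rw [← hAdisj i j hij]
        intro x hx; exact ⟨hx.1.2, hx.2.2⟩)
    rw [hcov] at this
    exact this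
  have hsum1 : ∑ p ∈ P ×ˢ Finset.range N, Ξ (C p) = 1 := by
    have := Xi_biUnion Ξ hΞ0 hΞadd (P ×ˢ Finset.range N) C hCd
    rw [hCc, hΞ1] at this
    exact this.symm
  -- main chain
  have step1 : ∑ E ∈ P, Ξ E * sInf ((fun k => f k + g k) '' E)
      = ∑ p ∈ P ×ˢ Finset.range N, Ξ (C p) * sInf ((fun k => f k + g k) '' p.1) := by
    rw [Finset.sum_product]
    refine Finset.sum_congr rfl fun E hE => ?_
    rw [hXiE E hE, Finset.sum_mul]
  have step2 : ∑ p ∈ P ×ˢ Finset.range N, Ξ (C p) * sInf ((fun k => f k + g k) '' p.1)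
      ≤ ∑ p ∈ P ×ˢ Finset.range N,
          Ξ (C p) * (sInf (f '' C p) + sInf (g '' C p) + ε) := by
    refine Finset.sum_le_sum ?_
    rintro ⟨E, i⟩ hp
    rcases Set.eq_empty_or_nonempty (C (E, i)) with hemp | hne
    · rw [hemp, hΞ0]; ring_nf; simp
    · refine mul_le_mul_of_nonneg_left ?_ (hΞnn _)
      set D := C (E, i) with hD
      have hDE : D ⊆ E := Set.inter_subset_left
      have hDne : ((fun k => f k + g k) '' D).Nonempty := hne.image _
      have hbb : BddBelow ((fun k => f k + g k) '' E) :=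
        ⟨0, by rintro y ⟨x, _, rfl⟩; exact add_nonneg (hf0 x) (hg0 x)⟩
      have h1 : sInf ((fun k => f k + g k) '' E) ≤ sInf ((fun k => f k + g k) '' D) :=
        csInf_le_csInf hbb hDne (Set.image_mono hDE)
      have hbbD : BddBelow ((fun k => f k + g k) '' D) :=
        ⟨0, by rintro y ⟨x, _, rfl⟩; exact add_nonneg (hf0 x) (hg0 x)⟩
      have h2 : sInf ((fun k => f k + g k) '' D) - ((i:ℝ)+1) * ε ≤ sInf (f '' D) := by
        refine le_csInf (hne.image _) ?_
        rintro y ⟨x, hx, rfl⟩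
        have hxA : x ∈ A i := hx.2
        have hle : sInf ((fun k => f k + g k) '' D) ≤ f x + g x :=
          csInf_le hbbD (Set.mem_image_of_mem _ hx)
        have hgx : g x < ((i:ℝ)+1) * ε := hxA.2
        linarith
      have h3 : (i:ℝ) * ε ≤ sInf (g '' D) := by
        refine le_csInf (hne.image _) ?_
        rintro y ⟨x, hx, rfl⟩
        exact hx.2.1
      linarith
  have step3 : ∑ p ∈ P ×ˢ Finset.range N,
        Ξ (C p) * (sInf (f '' C p) + sInf (g '' C p) + ε)
      = (∑ p ∈ P ×ˢ Finset.range N, Ξ (C p) * sInf (f '' C p))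
        + (∑ p ∈ P ×ˢ Finset.range N, Ξ (C p) * sInf (g '' C p)) + ε := by
    simp only [mul_add]
    rw [Finset.sum_add_distrib, Finset.sum_add_distrib, ← Finset.sum_mul, hsum1, one_mul]
  have hf_le : ∑ p ∈ P ×ˢ Finset.range N, Ξ (C p) * sInf (f '' C p) ≤ famInt Ξ f :=
    indexed_lowerSum_le_famInt Ξ hΞnn hΞ0 hΞadd hΞ1 _ C hCd hCc f Mf hMf hf0 hfM
  have hg_le : ∑ p ∈ P ×ˢ Finset.range N, Ξ (C p) * sInf (g '' C p) ≤ famInt Ξ g :=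
    indexed_lowerSum_le_famInt Ξ hΞnn hΞ0 hΞadd hΞ1 _ C hCd hCc g Mg hMg hg0 hgM
  calc ∑ E ∈ P, Ξ E * sInf ((fun k => f k + g k) '' E)
      = ∑ p ∈ P ×ˢ Finset.range N, Ξ (C p) * sInf ((fun k => f k + g k) '' p.1) := step1
    _ ≤ ∑ p ∈ P ×ˢ Finset.range N,
          Ξ (C p) * (sInf (f '' C p) + sInf (g '' C p) + ε) := step2
    _ = _ + _ + ε := step3
    _ ≤ famInt Ξ f + famInt Ξ g + ε := by linarith


lemma mu_finsetSup {B : Type*} [CompleteBooleanAlgebra B] (μ : B → ℝ) (h0 : μ ⊥ = 0)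
    (hadd : ∀ a b : B, a ⊓ b = ⊥ → μ (a ⊔ b) = μ a + μ b)
    {ι : Type*} (J : Finset ι) (t : ι → B)
    (hd : ∀ i ∈ J, ∀ j ∈ J, i ≠ j → t i ⊓ t j = ⊥) :
    μ (J.sup t) = ∑ i ∈ J, μ (t i) := by
  classical
  induction J using Finset.induction with
  | empty => simpa using h0
  | @insert a J ha ih =>
      have hdis : t a ⊓ J.sup t = ⊥ := by
        rw [inf_comm, Finset.sup_inf_distrib_right]
        refine (Finset.sup_eq_bot_iff _ _).mpr fun i hi => ?_
        rw [inf_comm]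
        exact hd a (mem_insert_self a J) i (mem_insert_of_mem hi)
          (by rintro rfl; exact ha hi)
      rw [Finset.sup_insert, hadd _ _ hdis, Finset.sum_insert ha,
        ih (fun i hi j hj hij => hd i (mem_insert_of_mem hi) j (mem_insert_of_mem hj) hij)]

end Helpers

/-- Limit lemma: in a (σ-)complete Boolean algebra with a strictly positive σ-additive
probability measure `μ`, if `μ(b ℓ ⊓ r*)/μ(r*) ≥ δ` for all `ℓ ∈ W`, then there is a
nonzero `r⊗ ≤ r*` such that for every nonzero `r ≤ r⊗`,
`∫_K (1/|P k|) ∑_{ℓ ∈ P k} μ(b ℓ ⊓ r)/μ(r) dΞ ≥ δ`. -/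
theorem stmt17 {B : Type*} [CompleteBooleanAlgebra B] (μ : B → ℝ)
    (hpos : ∀ b : B, b ≠ ⊥ → 0 < μ b) (h0 : μ ⊥ = 0) (h1 : μ ⊤ = 1)
    (hadd : ∀ a b : B, a ⊓ b = ⊥ → μ (a ⊔ b) = μ a + μ b)
    (hsigma : ∀ s : ℕ → B, (∀ i j, i ≠ j → s i ⊓ s j = ⊥) →
      μ (⨆ n, s n) = ∑' n, μ (s n))
    {K W : Type*} (Ξ : Set K → ℝ) (hΞnn : ∀ A : Set K, 0 ≤ Ξ A) (hΞ0 : Ξ ∅ = 0)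
    (hΞadd : ∀ A C : Set K, A ∩ C = ∅ → Ξ (A ∪ C) = Ξ A + Ξ C)
    (hΞ1 : Ξ Set.univ = 1)
    (Pk : K → Finset W) (hPne : ∀ k, (Pk k).Nonempty)
    (hPdisj : ∀ k k', k ≠ k' → Disjoint (Pk k) (Pk k'))
    (hPcov : ∀ ℓ : W, ∃ k, ℓ ∈ Pk k)
    (δ : ℝ) (hδ : δ ∈ Set.Icc (0 : ℝ) 1)
    (rstar : B) (hrstar : rstar ≠ ⊥) (b : W → B)
    (hb : ∀ ℓ : W, δ ≤ μ (b ℓ ⊓ rstar) / μ rstar) :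
    ∃ rot : B, rot ≤ rstar ∧ rot ≠ ⊥ ∧ ∀ r ≤ rot, r ≠ ⊥ →
      δ ≤ famInt Ξ (fun k => ((Pk k).card : ℝ)⁻¹ * ∑ ℓ ∈ Pk k, μ (b ℓ ⊓ r) / μ r) := by
  classical
  obtain ⟨hδ0, hδ1⟩ := hδ
  -- basic facts about μ
  have hμnn : ∀ t : B, 0 ≤ μ t := by
    intro t
    rcases eq_or_ne t ⊥ with rfl | h
    · exact le_of_eq h0.symm
    · exact (hpos t h).le
  have hμmono : ∀ a c : B, a ≤ c → μ a ≤ μ c := by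
    intro a c hac
    have hrep : a ⊔ c \ a = c := sup_sdiff_cancel' le_rfl hac
    have hdis : a ⊓ c \ a = ⊥ := inf_sdiff_self_right
    have := hadd a (c \ a) hdis
    rw [hrep] at this
    have := hμnn (c \ a)
    linarith
  have hμ1le : ∀ t : B, μ t ≤ 1 := fun t => h1 ▸ hμmono t ⊤ le_top
  have hK : Nonempty K := by
    by_contra h
    rw [not_nonempty_iff] at h
    rw [Set.univ_eq_empty_iff.mpr h, hΞ0] at hΞ1
    norm_num at hΞ1
  -- the unnormalized integrand
  set g : B → K → ℝ := fun t k => ((Pk k).card : ℝ)⁻¹ * ∑ ℓ ∈ Pk k, μ (b ℓ ⊓ t) with hg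
  have hcardpos : ∀ k : K, (0:ℝ) < ((Pk k).card : ℝ) := by
    intro k
    exact_mod_cast Finset.card_pos.mpr (hPne k)
  have hg0 : ∀ t k, 0 ≤ g t k := by
    intro t k
    exact mul_nonneg (inv_nonneg.mpr (hcardpos k).le)
      (Finset.sum_nonneg fun ℓ _ => hμnn _)
  have hgle : ∀ t k, g t k ≤ μ t := by
    intro t k
    have hsum : ∑ ℓ ∈ Pk k, μ (b ℓ ⊓ t) ≤ ((Pk k).card : ℝ) * μ t := by
      calc ∑ ℓ ∈ Pk k, μ (b ℓ ⊓ t) ≤ ∑ _ℓ ∈ Pk k, μ t :=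
            Finset.sum_le_sum fun ℓ _ => hμmono _ _ inf_le_right
        _ = ((Pk k).card : ℝ) * μ t := by rw [Finset.sum_const, nsmul_eq_mul]
    rw [hg]
    calc ((Pk k).card : ℝ)⁻¹ * ∑ ℓ ∈ Pk k, μ (b ℓ ⊓ t)
        ≤ ((Pk k).card : ℝ)⁻¹ * (((Pk k).card : ℝ) * μ t) :=
          mul_le_mul_of_nonneg_left hsum (inv_nonneg.mpr (hcardpos k).le)
      _ = μ t := by field_simp
  set ν : B → ℝ := fun t => famInt Ξ (g t) with hν
  have hν0 : ∀ t, 0 ≤ ν t := fun t =>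
    le_famInt Ξ hΞnn hΞ0 hΞadd hΞ1 hK (g t) (μ t) (hμnn t) (hg0 t) (hgle t) 0 (hg0 t)
  have hνle : ∀ t, ν t ≤ μ t := fun t =>
    famInt_le_bound Ξ hΞnn hΞ0 hΞadd hΞ1 (g t) (μ t) (hμnn t) (hg0 t) (hgle t)
  set lam : B → ℝ := fun t => ν t - δ * μ t with hlam
  have hlam_le : ∀ t, lam t ≤ (1 - δ) * μ t := by
    intro t
    have h := hνle t
    simp only [hlam]
    nlinarith
  have hlam_lb : ∀ t, -1 ≤ lam t := by
    intro t
    have h1' := hν0 t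
    have h2' := hμ1le t
    have h3' := hμnn t
    simp only [hlam]
    nlinarith
  have hlam_abs : ∀ t, |lam t| ≤ μ t := by
    intro t
    rw [abs_le]
    constructor
    · have := hν0 t
      have := hμnn t
      simp only [hlam]
      nlinarith
    · have := hlam_le t
      have := hμnn t
      nlinarith
  -- additivity of the integrand
  have hgadd : ∀ a c : B, a ⊓ c = ⊥ → ∀ k, g (a ⊔ c) k = g a k + g c k := by
    intro a c hac k
    have hmu : ∀ ℓ : W, μ (b ℓ ⊓ (a ⊔ c)) = μ (b ℓ ⊓ a) + μ (b ℓ ⊓ c) := by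
      intro ℓ
      rw [inf_sup_left]
      refine hadd _ _ ?_
      have hle : b ℓ ⊓ a ⊓ (b ℓ ⊓ c) ≤ a ⊓ c := inf_le_inf inf_le_right inf_le_right
      rw [hac] at hle
      exact le_bot_iff.mp hle
    simp only [hg]
    rw [← mul_add, ← Finset.sum_add_distrib]
    congr 1
    exact Finset.sum_congr rfl fun ℓ _ => hmu ℓ
  have hνsub : ∀ a c : B, a ⊓ c = ⊥ → ν (a ⊔ c) ≤ ν a + ν c := by
    intro a c hac
    have heq : famInt Ξ (g (a ⊔ c)) = famInt Ξ (fun k => g a k + g c k) := by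
      congr 1
      funext k
      exact hgadd a c hac k
    simp only [hν]
    rw [heq]
    exact famInt_add_le Ξ hΞnn hΞ0 hΞadd hΞ1 hK (g a) (g c) (μ a) (μ c) (hμnn a) (hμnn c)
      (hg0 a) (hgle a) (hg0 c) (hgle c)
  -- λ(r*) ≥ 0
  have hμrs : 0 < μ rstar := hpos rstar hrstar
  have hlam_rstar : 0 ≤ lam rstar := by
    have hglb : ∀ k, δ * μ rstar ≤ g rstar k := by
      intro k
      have hsum : ((Pk k).card : ℝ) * (δ * μ rstar) ≤ ∑ ℓ ∈ Pk k, μ (b ℓ ⊓ rstar) := by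
        calc ((Pk k).card : ℝ) * (δ * μ rstar) = ∑ _ℓ ∈ Pk k, δ * μ rstar := by
              rw [Finset.sum_const, nsmul_eq_mul]
          _ ≤ ∑ ℓ ∈ Pk k, μ (b ℓ ⊓ rstar) := by
              refine Finset.sum_le_sum fun ℓ _ => ?_
              have := hb ℓ
              rw [le_div_iff₀ hμrs] at this
              linarith
      have h2 : δ * μ rstar = ((Pk k).card : ℝ)⁻¹ * (((Pk k).card : ℝ) * (δ * μ rstar)) := by
        field_simp
      rw [hg]
      rw [h2]
      exact mul_le_mul_of_nonneg_left hsum (inv_nonneg.mpr (hcardpos k).le)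
    have : δ * μ rstar ≤ ν rstar :=
      le_famInt Ξ hΞnn hΞ0 hΞadd hΞ1 hK (g rstar) (μ rstar) (hμnn rstar)
        (hg0 rstar) (hgle rstar) (δ * μ rstar) hglb
    simp only [hlam]
    linarith
  -- suppose the conclusion fails
  by_contra hcon
  push_neg at hcon
  -- density of negativity
  have hdens : ∀ t : B, t ≤ rstar → t ≠ ⊥ → ∃ q : B, q ≤ t ∧ q ≠ ⊥ ∧ lam q < 0 := by
    intro t ht htb
    obtain ⟨q, hq1, hq2, hq3⟩ := hcon t ht htb
    refine ⟨q, hq1, hq2, ?_⟩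
    -- show ν q ≤ μ q * famInt Ξ (normalized integrand)
    have hμq : 0 < μ q := hpos q hq2
    set F : K → ℝ := fun k => ((Pk k).card : ℝ)⁻¹ * ∑ ℓ ∈ Pk k, μ (b ℓ ⊓ q) / μ q with hF
    have hF0 : ∀ k, 0 ≤ F k := by
      intro k
      exact mul_nonneg (inv_nonneg.mpr (hcardpos k).le)
        (Finset.sum_nonneg fun ℓ _ => div_nonneg (hμnn _) hμq.le)
    have hF1 : ∀ k, F k ≤ 1 := by
      intro k
      have : ∀ ℓ ∈ Pk k, μ (b ℓ ⊓ q) / μ q ≤ 1 := fun ℓ _ =>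
        (div_le_one hμq).mpr (hμmono _ _ inf_le_right)
      calc F k ≤ ((Pk k).card : ℝ)⁻¹ * ∑ _ℓ ∈ Pk k, (1:ℝ) :=
            mul_le_mul_of_nonneg_left (Finset.sum_le_sum this)
              (inv_nonneg.mpr (hcardpos k).le)
        _ = 1 := by
            rw [Finset.sum_const, nsmul_eq_mul, mul_one]
            field_simp
    have hgF : ∀ k, g q k = μ q * F k := by
      intro k
      simp only [hg, hF]
      rw [← Finset.sum_div]
      field_simp
    have hIF0 : 0 ≤ famInt Ξ F :=
      le_famInt Ξ hΞnn hΞ0 hΞadd hΞ1 hK F 1 zero_le_one hF0 hF1 0 hF0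
    have hνF : ν q ≤ μ q * famInt Ξ F := by
      refine Real.sSup_le ?_ (mul_nonneg hμq.le hIF0)
      rintro x ⟨P, hPd, hPc, rfl⟩
      have hinf : ∀ E : Set K, sInf (g q '' E) = μ q * sInf (F '' E) := by
        intro E
        have himg : g q '' E = μ q • (F '' E) := by
          ext y
          simp only [Set.mem_image, Set.mem_smul_set, smul_eq_mul]
          constructor
          · rintro ⟨x, hx, rfl⟩; exact ⟨F x, ⟨x, hx, rfl⟩, (hgF x).symm⟩
          · rintro ⟨z, ⟨x, hx, rfl⟩, rfl⟩; exact ⟨x, hx, hgF x⟩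
        rw [himg, Real.sInf_smul_of_nonneg hμq.le, smul_eq_mul]
      have hsum : ∑ E ∈ P, Ξ E * sInf (g q '' E)
          = μ q * ∑ E ∈ P, Ξ E * sInf (F '' E) := by
        rw [Finset.mul_sum]
        refine Finset.sum_congr rfl fun E _ => ?_
        rw [hinf E]; ring
      rw [hsum]
      refine mul_le_mul_of_nonneg_left ?_ hμq.le
      exact le_csSup (bddAbove_famIntSet Ξ hΞnn hΞ0 hΞadd hΞ1 F 1 zero_le_one hF0 hF1)
        ⟨P, hPd, hPc, rfl⟩
    have : ν q < δ * μ q := by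
      calc ν q ≤ μ q * famInt Ξ F := hνF
        _ < μ q * δ := by exact mul_lt_mul_of_pos_left hq3 hμq
        _ = δ * μ q := mul_comm _ _
    simp only [hlam]
    linarith
  -- the infimum of λ below t
  set β : B → ℝ := fun t => sInf {x | ∃ q : B, q ≤ t ∧ q ≠ ⊥ ∧ lam q = x} with hβ
  have hβbb : ∀ t : B, BddBelow {x | ∃ q : B, q ≤ t ∧ q ≠ ⊥ ∧ lam q = x} := by
    intro t
    exact ⟨-1, by rintro x ⟨q, _, _, rfl⟩; exact hlam_lb q⟩
  have hβle : ∀ t q : B, q ≤ t → q ≠ ⊥ → β t ≤ lam q := by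
    intro t q hq hqb
    exact csInf_le (hβbb t) ⟨q, hq, hqb, rfl⟩
  have hpick0 : ∀ t : B, t ≤ rstar → t ≠ ⊥ →
      ∃ q : B, q ≤ t ∧ q ≠ ⊥ ∧ lam q < β t / 2 ∧ lam q < 0 := by
    intro t ht htb
    obtain ⟨q0, hq01, hq02, hq03⟩ := hdens t ht htb
    have hne : {x | ∃ q : B, q ≤ t ∧ q ≠ ⊥ ∧ lam q = x}.Nonempty := ⟨lam q0, q0, hq01, hq02, rfl⟩
    have hβneg : β t < 0 := lt_of_le_of_lt (hβle t q0 hq01 hq02) hq03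
    obtain ⟨x, ⟨q, hq1, hq2, rfl⟩, hx⟩ := exists_lt_of_csInf_lt hne
      (show β t < β t / 2 by linarith)
    exact ⟨q, hq1, hq2, hx, hx.trans (div_neg_of_neg_of_pos hβneg two_pos)⟩
  have hex : ∀ t : B, ∃ p : B, p ≤ t ∧ (t ≤ rstar → t ≠ ⊥ →
      (p ≠ ⊥ ∧ lam p < β t / 2 ∧ lam p < 0)) := by
    intro t
    by_cases h : t ≤ rstar ∧ t ≠ ⊥
    · obtain ⟨q, h1', h2', h3', h4'⟩ := hpick0 t h.1 h.2
      exact ⟨q, h1', fun _ _ => ⟨h2', h3', h4'⟩⟩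
    · exact ⟨⊥, bot_le, fun ha hb' => absurd ⟨ha, hb'⟩ h⟩
  choose pick hpick_le hpick_spec using hex
  clear_value g ν lam β
  -- the recursive sequence
  obtain ⟨s, hs0, hsS⟩ : ∃ s : ℕ → B, s 0 = rstar ∧ ∀ n, s (n+1) = s n \ pick (s n) :=
    ⟨fun n => Nat.rec rstar (fun _ t => t \ pick t) n, rfl, fun _ => rfl⟩
  set r : ℕ → B := fun n => pick (s n) with hrdef
  have hrle : ∀ n, r n ≤ s n := fun n => hpick_le (s n)
  have hsle : ∀ n, s n ≤ rstar := by
    intro n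
    induction n with
    | zero => rw [hs0]
    | succ n ih => rw [hsS]; exact le_trans sdiff_le ih
  have hs_eq : ∀ n, s n = rstar \ (Finset.range n).sup r := by
    intro n
    induction n with
    | zero => simp [hs0]
    | succ n ih =>
        have hrn : r n = pick (s n) := rfl
        rw [hsS, ← hrn, ih, sdiff_sdiff_left]
        congr 1
        rw [Finset.range_add_one, Finset.sup_insert, sup_comm]
  have hrdisj : ∀ i j, i ≠ j → r i ⊓ r j = ⊥ := by
    have key : ∀ i j, i < j → r i ⊓ r j = ⊥ := by
      intro i j hij
      have h1' : r i ≤ (Finset.range j).sup r := Finset.le_sup (Finset.mem_range.mpr hij)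
      have h2' : r j ≤ rstar \ (Finset.range j).sup r := (hs_eq j) ▸ hrle j
      have : r i ⊓ r j ≤ (Finset.range j).sup r ⊓ (rstar \ (Finset.range j).sup r) :=
        inf_le_inf h1' h2'
      rw [inf_sdiff_self_right] at this
      exact le_bot_iff.mp this
    intro i j hij
    rcases hij.lt_or_gt with h | h
    · exact key i j h
    · rw [inf_comm]; exact key j i h
  have hsupler : ∀ n, (Finset.range n).sup r ≤ rstar :=
    fun n => Finset.sup_le fun i _ => le_trans (hrle i) (hsle i)
  have hmurep : ∀ n, μ rstar = ∑ i ∈ Finset.range n, μ (r i) + μ (s n) := by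
    intro n
    have hrep : (Finset.range n).sup r ⊔ s n = rstar := by
      rw [hs_eq n]
      exact sup_sdiff_cancel' le_rfl (hsupler n)
    have hdis : (Finset.range n).sup r ⊓ s n = ⊥ := by
      rw [hs_eq n]; exact inf_sdiff_self_right
    have := hadd _ _ hdis
    rw [hrep] at this
    rw [this, mu_finsetSup μ h0 hadd _ r
      (fun i _ j _ hij => hrdisj i j hij)]
  have hsummable : Summable (fun n => μ (r n)) := by
    refine summable_of_sum_range_le (c := μ rstar) (fun n => hμnn _) (fun n => ?_)
    have := hmurep n
    have := hμnn (s n)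
    linarith
  have hμr_to0 : Filter.Tendsto (fun n => μ (r n)) Filter.atTop (nhds 0) :=
    hsummable.tendsto_atTop_zero
  have hνsupsum : ∀ n, ν ((Finset.range n).sup r) ≤ ∑ i ∈ Finset.range n, ν (r i) := by
    intro n
    induction n with
    | zero =>
        simp only [Finset.range_zero, Finset.sup_empty, Finset.sum_empty]
        have := hνle ⊥
        rw [h0] at this
        exact this
    | succ n ih =>
        rw [Finset.range_add_one, Finset.sup_insert, Finset.sum_insert (by simp)]
        have hdis : r n ⊓ (Finset.range n).sup r = ⊥ := by
          rw [Finset.sup_inf_distrib_left]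
          exact (Finset.sup_eq_bot_iff _ _).mpr fun i hi =>
            hrdisj n i (Finset.mem_range.mp hi).ne'
        calc ν (r n ⊔ (Finset.range n).sup r)
            ≤ ν (r n) + ν ((Finset.range n).sup r) := hνsub _ _ hdis
          _ ≤ ν (r n) + ∑ i ∈ Finset.range n, ν (r i) := by linarith
  have hlamrep : ∀ n, lam rstar ≤ ∑ i ∈ Finset.range n, lam (r i) + lam (s n) := by
    intro n
    have h1' : ν rstar ≤ ∑ i ∈ Finset.range n, ν (r i) + ν (s n) := by
      have hrep : (Finset.range n).sup r ⊔ s n = rstar := by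
        rw [hs_eq n]; exact sup_sdiff_cancel' le_rfl (hsupler n)
      have hdis : (Finset.range n).sup r ⊓ s n = ⊥ := by
        rw [hs_eq n]; exact inf_sdiff_self_right
      calc ν rstar = ν ((Finset.range n).sup r ⊔ s n) := by rw [hrep]
        _ ≤ ν ((Finset.range n).sup r) + ν (s n) := hνsub _ _ hdis
        _ ≤ _ := by have := hνsupsum n; linarith
    have h2' := hmurep n
    have h3' : δ * μ rstar = δ * ∑ i ∈ Finset.range n, μ (r i) + δ * μ (s n) := by
      rw [h2']; ring
    have e1 : ∑ i ∈ Finset.range n, (ν (r i) - δ * μ (r i))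
        = ∑ i ∈ Finset.range n, ν (r i) - δ * ∑ i ∈ Finset.range n, μ (r i) := by
      rw [Finset.sum_sub_distrib, Finset.mul_sum]
    simp only [hlam]
    rw [e1]
    linarith
  have hlamr_nonpos : ∀ n, lam (r n) ≤ 0 := by
    intro n
    by_cases h : s n = ⊥
    · have hrb : r n = ⊥ := le_bot_iff.mp (h ▸ hrle n)
      rw [hrdef] at hrb ⊢
      rw [hrb]
      have := hlam_le ⊥
      rw [h0] at this
      linarith
    · exact ((hpick_spec (s n) (hsle n) h).2.2).le
  by_cases hbot : rstar \ (⨆ n, r n) = ⊥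
  · -- case r⊗ = ⊥
    have hsupr : (⨆ n, r n) ≤ rstar := iSup_le fun n => le_trans (hrle n) (hsle n)
    have hrs_eq : rstar = ⨆ n, r n := le_antisymm (sdiff_eq_bot_iff.mp hbot) hsupr
    have hts : μ rstar = ∑' n, μ (r n) := by rw [hrs_eq]; exact hsigma r hrdisj
    have hpartial : Filter.Tendsto (fun n => ∑ i ∈ Finset.range n, μ (r i))
        Filter.atTop (nhds (μ rstar)) := by
      rw [hts]; exact hsummable.hasSum.tendsto_sum_nat
    have hμs_to : Filter.Tendsto (fun n => μ (s n)) Filter.atTop (nhds 0) := by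
      have he : (fun n => μ (s n)) = fun n => μ rstar - ∑ i ∈ Finset.range n, μ (r i) := by
        funext n; have := hmurep n; linarith
      rw [he]
      have h := hpartial.const_sub (μ rstar)
      simpa using h
    have hr0 : lam (r 0) < 0 :=
      (hpick_spec (s 0) (hsle 0) (by rw [hs0]; exact hrstar)).2.2
    have hsum_le : ∀ n, ∑ i ∈ Finset.range (n+1), lam (r i) ≤ lam (r 0) := by
      intro n
      induction n with
      | zero => simp
      | succ n ih =>
          rw [Finset.sum_range_succ]
          have := hlamr_nonpos (n+1)
          linarith
    have hkey : ∀ n : ℕ, lam rstar - lam (r 0) ≤ (1-δ) * μ (s (n+1)) := by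
      intro n
      have h1' := hlamrep (n+1)
      have h2' := hsum_le n
      have h3' := hlam_le (s (n+1))
      linarith
    have htend : Filter.Tendsto (fun n : ℕ => (1-δ) * μ (s (n+1))) Filter.atTop (nhds 0) := by
      have h := hμs_to.comp (Filter.tendsto_add_atTop_nat 1)
      have h2 := h.const_mul (1-δ)
      simpa [Function.comp] using h2
    have hfin : lam rstar - lam (r 0) ≤ 0 :=
      ge_of_tendsto htend (Filter.Eventually.of_forall hkey)
    linarith [hlam_rstar, hr0]
  · -- case r⊗ ≠ ⊥
    obtain ⟨q, hq1, hq2, hq3⟩ := hdens (rstar \ ⨆ n, r n) sdiff_le hbot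
    have hqs : ∀ n, q ≤ s n := by
      intro n
      induction n with
      | zero => rw [hs0]; exact le_trans hq1 sdiff_le
      | succ n ih =>
          rw [hsS]
          have hqc : q ≤ (r n)ᶜ := by
            refine le_trans hq1 ?_
            rw [sdiff_eq]
            exact le_trans inf_le_right (compl_le_compl (le_iSup r n))
          rw [sdiff_eq]
          exact le_inf ih hqc
    have hsnb : ∀ n, s n ≠ ⊥ := by
      intro n h
      exact hq2 (le_bot_iff.mp (h ▸ hqs n))
    have hspec : ∀ n, lam (r n) < β (s n) / 2 := fun n =>
      (hpick_spec (s n) (hsle n) (hsnb n)).2.1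
    have hql : ∀ n, 2 * lam (r n) ≤ lam q := by
      intro n
      have h1' := hβle (s n) q (hqs n) hq2
      have h2' := hspec n
      linarith
    have hlam_to : Filter.Tendsto (fun n => lam (r n)) Filter.atTop (nhds 0) := by
      refine squeeze_zero_norm (fun n => ?_) hμr_to0
      rw [Real.norm_eq_abs]
      exact hlam_abs (r n)
    have hfin : (0:ℝ) ≤ lam q := by
      have h2 : Filter.Tendsto (fun n => 2 * lam (r n)) Filter.atTop (nhds 0) := by
        simpa using hlam_to.const_mul 2
      exact le_of_tendsto h2 (Filter.Eventually.of_forall (fun n => hql n))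
    linarith
end
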